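/- arXiv:2602.18808 — 6 statements merged into one kernel-verified Lean document; each statement's English description precedes it below -/
import Mathlib

section
/- Let (Y, ρ) be a metric space with a Radon Borel probability measure μ, and let 𝒜 be an algebra of bounded continuous real-valued functions on Y that separates points and contains the constant functions. Then 𝒜 is dense in L^p(μ) for every p ∈ [1, ∞). -/
/-!
Approximate `f` in `L^p` by a bounded continuous `g₀` and pick a compact `K` carrying all but a
tiny mass of `μ`. Stone–Weierstrass on `K` gives `h ∈ 𝒜` uniformly close to `g₀` on `K`.
Composing `h` with a polynomial approximation of the clamp `x ↦ max (-B) (min B x)` yields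
`g ∈ 𝒜` that is still close to `g₀` on `K` but is bounded on all of `Y` by a constant that does
not depend on `K`. Hence `g₀ - g` is small in `L^p` on `K` by uniform closeness, and on `Kᶜ`
because it is bounded there and `μ Kᶜ` is small.
-/

open MeasureTheory Set Filter
open scoped ENNReal NNReal BoundedContinuousFunction

namespace MeasureTheory

variable {α E : Type*} [MeasurableSpace α] [NormedAddCommGroup E]

theorem eLpNorm_le_add_of_enorm_le_on {μ : Measure α} {p : ℝ≥0∞} (hp : 1 ≤ p) {u : α → E}
    (hu : AEStronglyMeasurable u μ) {s : Set α} (hs : MeasurableSet s) {a b : ℝ≥0∞}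
    (ha : ∀ x ∈ s, ‖u x‖ₑ ≤ a) (hb : ∀ x ∈ sᶜ, ‖u x‖ₑ ≤ b) :
    eLpNorm u p μ ≤ a * μ s ^ p.toReal⁻¹ + b * μ sᶜ ^ p.toReal⁻¹ := by
  have piece : ∀ {t : Set α} {c : ℝ≥0∞}, MeasurableSet t → (∀ x ∈ t, ‖u x‖ₑ ≤ c) →
      eLpNorm (t.indicator u) p μ ≤ c * μ t ^ p.toReal⁻¹ := fun ht hc => by
    rw [eLpNorm_indicator_eq_eLpNorm_restrict ht, ← Measure.restrict_apply_univ]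
    exact eLpNorm_le_of_ae_enorm_bound ((ae_restrict_iff' ht).2 (Eventually.of_forall hc))
  calc eLpNorm u p μ = eLpNorm (s.indicator u + sᶜ.indicator u) p μ := by
        rw [indicator_self_add_compl]
    _ ≤ eLpNorm (s.indicator u) p μ + eLpNorm (sᶜ.indicator u) p μ :=
        eLpNorm_add_le (hu.indicator hs) (hu.indicator hs.compl) hp
    _ ≤ _ := add_le_add (piece hs ha) (piece hs.compl hb)

end MeasureTheory

namespace BoundedContinuousFunction

variable {Y : Type*} [TopologicalSpace Y] (𝒜 : Subalgebra ℝ (Y →ᵇ ℝ))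

theorem aeval_apply (h : Y →ᵇ ℝ) (P : Polynomial ℝ) (y : Y) :
    Polynomial.aeval h P y = P.eval (h y) := by
  let eval_y : (Y →ᵇ ℝ) →ₐ[ℝ] ℝ :=
    ((Pi.evalAlgHom ℝ (fun _ => ℝ) y).comp (ContinuousMap.coeFnAlgHom ℝ)).comp
      (toContinuousMapₐ ℝ)
  exact (Polynomial.aeval_algHom_apply eval_y h P).symm

theorem exists_mem_subalgebra_near_comp {h : Y →ᵇ ℝ} (hh : h ∈ 𝒜) {φ : ℝ → ℝ}
    (hφ : Continuous φ) {ε : ℝ} (hε : 0 < ε) : ∃ g ∈ 𝒜, ∀ y, |g y - φ (h y)| < ε := by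
  obtain ⟨P, hP⟩ := exists_polynomial_near_of_continuousOn (-‖h‖) ‖h‖ φ hφ.continuousOn ε hε
  refine ⟨Polynomial.aeval h P,
    Algebra.adjoin_le (singleton_subset_iff.2 hh) (Polynomial.aeval_mem_adjoin_singleton ℝ h),
    fun y => ?_⟩
  rw [aeval_apply]
  exact hP _ (abs_le.1 (h.norm_coe_le_norm y))

theorem exists_mem_subalgebra_near_on_compact {K : Set Y} (hK : IsCompact K)
    (hsep : ∀ x ∈ K, ∀ y ∈ K, x ≠ y → ∃ h ∈ 𝒜, h x ≠ h y) (f : Y →ᵇ ℝ) {ε : ℝ} (hε : 0 < ε) :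
    ∃ h ∈ 𝒜, ∀ y ∈ K, |h y - f y| < ε := by
  have : CompactSpace K := isCompact_iff_compactSpace.1 hK
  let restrict : (Y →ᵇ ℝ) →ₐ[ℝ] C(K, ℝ) :=
    (ContinuousMap.compRightAlgHom ℝ ℝ ⟨Subtype.val, continuous_subtype_val⟩).comp
      (toContinuousMapₐ ℝ)
  have hsepK : (𝒜.map restrict).SeparatesPoints := by
    rintro ⟨x, hx⟩ ⟨y, hy⟩ hxy
    obtain ⟨h, hh, hne⟩ := hsep x hx y hy (fun e => hxy (Subtype.ext e))
    exact ⟨_, ⟨restrict h, Subalgebra.mem_map.2 ⟨h, hh, rfl⟩, rfl⟩, hne⟩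
  obtain ⟨⟨_, hgK⟩, hnear⟩ :=
    ContinuousMap.exists_mem_subalgebra_near_continuous_of_separatesPoints _ hsepK
      (fun y : K => f y) (f.continuous.comp continuous_subtype_val) ε hε
  obtain ⟨h, hh, rfl⟩ := Subalgebra.mem_map.1 hgK
  exact ⟨h, hh, fun y hy => hnear ⟨y, hy⟩⟩

theorem exists_mem_subalgebra_near_on_compact_of_abs_le {K : Set Y} (hK : IsCompact K)
    (hsep : ∀ x ∈ K, ∀ y ∈ K, x ≠ y → ∃ h ∈ 𝒜, h x ≠ h y) (f : Y →ᵇ ℝ) {ε : ℝ} (hε : 0 < ε) :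
    ∃ g ∈ 𝒜, (∀ y ∈ K, |g y - f y| < ε) ∧ ∀ y, |g y| ≤ ‖f‖ + 2 * ε := by
  obtain ⟨h, hh, hhK⟩ := exists_mem_subalgebra_near_on_compact 𝒜 hK hsep f (half_pos hε)
  set B := ‖f‖ + ε
  have hclamp : Continuous fun x : ℝ => max (-B) (min B x) :=
    continuous_const.max (continuous_const.min continuous_id)
  obtain ⟨g, hg, hgh⟩ := exists_mem_subalgebra_near_comp 𝒜 hh hclamp (half_pos hε)
  refine ⟨g, hg, fun y hy => ?_, fun y => ?_⟩
  · have hfy := f.norm_coe_le_norm y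
    have hhy := abs_lt.1 (hhK y hy)
    have hgy := abs_lt.1 (hgh y)
    rw [Real.norm_eq_abs, abs_le] at hfy
    rw [min_eq_right (by linarith), max_eq_right (by linarith)] at hgy
    rw [abs_lt]
    constructor <;> linarith
  · have hgy := abs_lt.1 (hgh y)
    have hle : max (-B) (min B (h y)) ≤ B :=
      max_le (by linarith [norm_nonneg f]) (min_le_left _ _)
    have hge : -B ≤ max (-B) (min B (h y)) := le_max_left _ _
    rw [abs_le]
    constructor <;> linarith

theorem exists_mem_subalgebra_eLpNorm_sub_le [T2Space Y] [MeasurableSpace Y]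
    [OpensMeasurableSpace Y] (μ : Measure Y) [IsFiniteMeasure μ]
    (htight : ∀ ε : ℝ≥0∞, ε ≠ 0 → ∃ K : Set Y, IsCompact K ∧ μ Kᶜ < ε)
    (hsep : ∀ x y : Y, x ≠ y → ∃ h ∈ 𝒜, h x ≠ h y) {p : ℝ≥0∞} (hp : 1 ≤ p) (hp' : p ≠ ∞)
    (f : Y →ᵇ ℝ) {η : ℝ≥0∞} (hη : η ≠ 0) : ∃ g ∈ 𝒜, eLpNorm (f - g) p μ ≤ η := by
  have hη2 : η / 2 ≠ 0 := ENNReal.half_pos hη |>.ne'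
  have hq : p.toReal ≠ 0 := (ENNReal.toReal_pos (one_pos.trans_le hp).ne' hp').ne'
  obtain ⟨r, hr, hrη⟩ : ∃ r : ℝ≥0, 0 < r ∧ r * μ univ ^ p.toReal⁻¹ < η / 2 :=
    ENNReal.exists_nnreal_pos_mul_lt
      (ENNReal.rpow_ne_top_of_nonneg (by positivity) (measure_ne_top μ _)) hη2
  set C : ℝ := 2 * ‖f‖ + 2 * r
  obtain ⟨c, hc, hcη⟩ : ∃ c : ℝ≥0, 0 < c ∧ c * ENNReal.ofReal C < η / 2 :=
    ENNReal.exists_nnreal_pos_mul_lt ENNReal.ofReal_ne_top hη2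
  obtain ⟨K, hK, hKc⟩ := htight ((c : ℝ≥0∞) ^ p.toReal)
    (ENNReal.rpow_pos (ENNReal.coe_pos.2 hc) ENNReal.coe_ne_top).ne'
  obtain ⟨g, hg, hgK, hgf⟩ := exists_mem_subalgebra_near_on_compact_of_abs_le 𝒜 hK
    (fun x _ y _ => hsep x y) f (NNReal.coe_pos.2 hr)
  have hgfC (y : Y) : |g y - f y| ≤ C := by
    have := f.norm_coe_le_norm y
    rw [Real.norm_eq_abs] at this
    linarith [abs_sub (g y) (f y), hgf y]
  refine ⟨g, hg, ?_⟩
  have hbound : ∀ {y : Y} {t : ℝ}, |g y - f y| ≤ t → ‖(f - g) y‖ₑ ≤ ENNReal.ofReal t :=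
    fun hy => by
      rw [Real.enorm_eq_ofReal_abs, sub_apply, abs_sub_comm]
      exact ENNReal.ofReal_le_ofReal hy
  calc eLpNorm (f - g) p μ
      ≤ ENNReal.ofReal r * μ K ^ p.toReal⁻¹ + ENNReal.ofReal C * μ Kᶜ ^ p.toReal⁻¹ :=
        eLpNorm_le_add_of_enorm_le_on hp (f - g).continuous.aestronglyMeasurable
          hK.isClosed.measurableSet (fun y hy => hbound (hgK y hy).le)
          (fun y _ => hbound (hgfC y))
    _ ≤ ENNReal.ofReal r * μ univ ^ p.toReal⁻¹ + ENNReal.ofReal C * c := by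
        gcongr
        · exact subset_univ K
        · rw [← ENNReal.rpow_rpow_inv hq c]
          gcongr
    _ ≤ η / 2 + η / 2 := by
        rw [ENNReal.ofReal_coe_nnreal, mul_comm (ENNReal.ofReal C)]
        exact add_le_add hrη.le hcη.le
    _ = η := ENNReal.add_halves η

end BoundedContinuousFunction

/-- Let `(Y, ρ)` be a metric space with a Radon Borel probability measure
`μ` (inner regular with respect to compact sets), and let `𝒜` be an algebra of bounded
continuous real-valued functions on `Y` that separates points and contains the constant
functions.  Then `𝒜` is dense in `L^p(μ)` for every `p ∈ [1, ∞)`. -/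
theorem algebra_separating_dense_Lp
    {Y : Type*} [MetricSpace Y] [MeasurableSpace Y] [BorelSpace Y]
    (μ : Measure Y) [IsProbabilityMeasure μ]
    (hRadon : ∀ ε : ℝ≥0∞, ε ≠ 0 → ∃ K : Set Y, IsCompact K ∧ μ Kᶜ < ε)
    (𝒜 : Subalgebra ℝ (BoundedContinuousFunction Y ℝ))
    (hsep : ∀ x y : Y, x ≠ y → ∃ h ∈ 𝒜, h x ≠ h y)
    (p : ℝ≥0∞) (hp : 1 ≤ p) (hp' : p ≠ ∞)
    (f : Y → ℝ) (hf : MemLp f p μ) (ε : ℝ≥0∞) (hε : ε ≠ 0) :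
    ∃ g ∈ 𝒜, eLpNorm (f - ⇑g) p μ < ε := by
  obtain ⟨δ, hδ, hδε⟩ := exists_between (pos_iff_ne_zero.2 hε)
  have hδ2 : δ / 2 ≠ 0 := (ENNReal.half_pos hδ.ne').ne'
  obtain ⟨g₀, hfg₀, -⟩ := hf.exists_boundedContinuous_eLpNorm_sub_le hp' hδ2
  obtain ⟨g, hg, hg₀g⟩ :=
    BoundedContinuousFunction.exists_mem_subalgebra_eLpNorm_sub_le 𝒜 μ hRadon hsep hp hp' g₀ hδ2
  refine ⟨g, hg, ?_⟩
  calc eLpNorm (f - ⇑g) p μ = eLpNorm ((f - ⇑g₀) + (⇑g₀ - ⇑g)) p μ := by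
        rw [sub_add_sub_cancel]
    _ ≤ eLpNorm (f - ⇑g₀) p μ + eLpNorm (⇑g₀ - ⇑g) p μ :=
        eLpNorm_add_le (hf.1.sub g₀.continuous.aestronglyMeasurable)
          (g₀ - g).continuous.aestronglyMeasurable hp
    _ ≤ δ / 2 + δ / 2 := add_le_add hfg₀ hg₀g
    _ = δ := ENNReal.add_halves δ
    _ < ε := hδε
end

section
/- Let ℒ be a quasi-definite linear functional on the symmetric algebra Sym(W) of a graded vector space W = ⊕_{m≥1} W^m of finite type, and let {p_n}_{n≥0} be a system of block-orthogonal polynomial vectors (p_n spanning, together with lower degrees, the polynomials of total degree ≤ n). Then for each n, each generator degree m ∈ [1,n], and each basis element w_{m,i} of W^m, there exist unique matrices M^k_{n,m,i} ∈ Mat(r_{n−m}, r_{n−m+k}), k = −m,…,m, such that w_{m,i}·p_{n−m} = Σ_{k=−m}^{m} M^k_{n,m,i} p_{n−m+k}. Moreover M^k_{n,m,i} H_{n−m+k} = H_{n−m} (M^{−k}_{n+k,m,i})^T, where H_n = (p_n, p_n^T) is the (invertible) Gram matrix. -/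
open scoped Classical

/- **Statement 7.**  The symmetric algebra `Sym(W)` of a graded vector space
`W = ⊕_{m≥1} W^m` of finite type (`dim W^m = N m`, with `N 0 = 0`) is modelled as the
multivariate polynomial ring over the index set `Σ m, Fin (N m)` of a homogeneous basis,
a generator `(m, i)` having degree `m`. -/

/-- Index type of the graded generators. -/
abbrev GIdx (N : ℕ → ℕ) := Σ m : ℕ, Fin (N m)

/-- Weighted (tensor/total) degree of an exponent multi-index. -/
def tdeg {N : ℕ → ℕ} (α : GIdx N →₀ ℕ) : ℕ := α.sum fun s k => s.1 * k

/-- The monomials of total degree `n` (index set for the vector `w_n`; `r_n` is its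
cardinality). -/
def Mon (N : ℕ → ℕ) (n : ℕ) := {α : GIdx N →₀ ℕ // tdeg α = n}

/-- A linear functional on `Sym(W)` is quasi-definite if some basis is orthogonal with
nonvanishing squares. -/
def QuasiDefinite {N : ℕ → ℕ} (ℒ : MvPolynomial (GIdx N) ℝ →ₗ[ℝ] ℝ) : Prop :=
  ∃ (ι : Type) (b : Module.Basis ι ℝ (MvPolynomial (GIdx N) ℝ)),
    (∀ i j, i ≠ j → ℒ (b i * b j) = 0) ∧ ∀ i, ℒ (b i * b i) ≠ 0

/-! The coefficient matrices are read off the expansion of `X s * p n' a` in the basis `{p_j}`.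
Pairing the expansion with the monomials of degree `t` and using block orthogonality gives a
triangular system whose diagonal blocks are the invertible matrices `(w_t, p_tᵀ)`; this yields
uniqueness of the coefficients and, since `X s * p n'` is orthogonal to all monomials of degree
`< n' - s.1`, the lower end of the band. Pairing with `p_j` instead kills every block except the
`j`-th, so `ℒ (X s * p n' a * p j b)` computed from either side gives the symmetry relation. -/

open MvPolynomial Finset

section TotalDegree

variable {N : ℕ → ℕ}

lemma tdeg_add (α β : GIdx N →₀ ℕ) : tdeg (α + β) = tdeg α + tdeg β :=
  Finsupp.sum_add_index' (fun _ => mul_zero _) fun _ _ _ => Nat.mul_add _ _ _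

lemma tdeg_single (s : GIdx N) (k : ℕ) : tdeg (Finsupp.single s k) = s.1 * k :=
  Finsupp.sum_single_index (mul_zero _)

noncomputable def restrictTDeg (K : Type*) [CommSemiring K] (N : ℕ → ℕ) (n : ℕ) :
    Submodule K (MvPolynomial (GIdx N) K) :=
  Submodule.span K {q | ∃ α : GIdx N →₀ ℕ, tdeg α ≤ n ∧ q = monomial α (1 : K)}

variable {K : Type*} [CommSemiring K]

lemma X_mul_mem_restrictTDeg {n : ℕ} {q : MvPolynomial (GIdx N) K}
    (hq : q ∈ restrictTDeg K N n) (s : GIdx N) : X s * q ∈ restrictTDeg K N (n + s.1) := by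
  induction hq using Submodule.span_induction with
  | mem q hq =>
    obtain ⟨α, hα, rfl⟩ := hq
    refine Submodule.subset_span ⟨Finsupp.single s 1 + α, ?_, ?_⟩
    · rw [tdeg_add, tdeg_single]
      omega
    · rw [X, monomial_mul, one_mul]
  | zero => simp
  | add q r _ _ hq hr => exact mul_add (X s) q r ▸ add_mem hq hr
  | smul a q _ hq => exact (mul_smul_comm a (X s) q).symm ▸ Submodule.smul_mem _ a hq

lemma map_mul_eq_zero_of_mem_restrictTDeg (ℒ : MvPolynomial (GIdx N) K →ₗ[K] K) {n : ℕ}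
    {q r : MvPolynomial (GIdx N) K} (hr : ∀ α, tdeg α ≤ n → ℒ (monomial α 1 * r) = 0)
    (hq : q ∈ restrictTDeg K N n) : ℒ (q * r) = 0 := by
  have : restrictTDeg K N n ≤ LinearMap.ker (ℒ ∘ₗ LinearMap.mulRight K r) :=
    Submodule.span_le.mpr fun _ ⟨α, hα, hq⟩ => hq ▸ hr α hα
  exact this hq

end TotalDegree

section BlockOrthogonal

variable {K : Type*} [CommRing K] {N : ℕ → ℕ}

variable (ℒ : MvPolynomial (GIdx N) K →ₗ[K] K) (p : (n : ℕ) → Mon N n → MvPolynomial (GIdx N) K)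

def IsBlockOrthogonal : Prop :=
  ∀ m n : ℕ, m < n → ∀ α : GIdx N →₀ ℕ, tdeg α = m → ∀ a : Mon N n, ℒ (monomial α 1 * p n a) = 0

/-- The matrix `(w_n, p_nᵀ)`. -/
noncomputable def leadingGram (n : ℕ) : Matrix (Mon N n) (Mon N n) K :=
  Matrix.of fun a b => ℒ (monomial a.1 1 * p n b)

variable {ℒ p}

lemma mem_restrictTDeg_of_span_eq
    (hspan : ∀ n, Submodule.span K {q | ∃ k ≤ n, ∃ a : Mon N k, q = p k a} = restrictTDeg K N n)
    (k : ℕ) (a : Mon N k) : p k a ∈ restrictTDeg K N k :=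
  hspan k ▸ Submodule.subset_span ⟨k, le_rfl, a, rfl⟩

lemma map_mul_eq_zero_of_ne (hdeg : ∀ k a, p k a ∈ restrictTDeg K N k)
    (horth : IsBlockOrthogonal ℒ p) {j j' : ℕ} (h : j ≠ j') (c : Mon N j) (b : Mon N j') :
    ℒ (p j c * p j' b) = 0 := by
  wlog hlt : j < j' generalizing j j'
  · rw [mul_comm]
    exact this h.symm b c (by omega)
  exact map_mul_eq_zero_of_mem_restrictTDeg ℒ
    (fun α hα => horth _ j' (by omega) α rfl b) (hdeg j c)

lemma exists_coeffs_of_mem_span [∀ n, Fintype (Mon N n)] {n : ℕ} {q : MvPolynomial (GIdx N) K}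
    (hq : q ∈ Submodule.span K {q | ∃ k ≤ n, ∃ a : Mon N k, q = p k a}) :
    ∃ c : ∀ j, Mon N j → K, (∀ j, n < j → c j = 0) ∧
      q = ∑ j ∈ range (n + 1), ∑ b, c j b • p j b := by
  have hrange : {q | ∃ k ≤ n, ∃ a : Mon N k, q = p k a} =
      Set.range fun i : Σ k : Fin (n + 1), Mon N k => p i.1 i.2 := by
    ext q
    constructor
    · rintro ⟨k, hk, a, rfl⟩
      exact ⟨⟨⟨k, by omega⟩, a⟩, rfl⟩
    · rintro ⟨⟨k, a⟩, rfl⟩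
      exact ⟨k, by omega, a, rfl⟩
  rw [hrange, Submodule.mem_span_range_iff_exists_fun] at hq
  obtain ⟨c, rfl⟩ := hq
  refine ⟨fun j b => if h : j < n + 1 then c ⟨⟨j, h⟩, b⟩ else 0,
    fun j hj => funext fun b => dif_neg (by omega), ?_⟩
  rw [← univ_sigma_univ, sum_sigma, sum_range]
  exact sum_congr rfl fun j _ => sum_congr rfl fun b _ => by simp only [dif_pos j.2]

lemma map_monomial_mul_X_mul_eq_zero (horth : IsBlockOrthogonal ℒ p) (s : GIdx N) {n : ℕ}
    (a : Mon N n) {α : GIdx N →₀ ℕ} (hα : tdeg α < n - s.1) :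
    ℒ (monomial α 1 * (X s * p n a)) = 0 := by
  rw [← mul_assoc, X, monomial_mul, one_mul]
  refine horth _ n ?_ _ rfl a
  rw [tdeg_add, tdeg_single]
  omega

variable [∀ n, Fintype (Mon N n)]

lemma map_monomial_mul_sum_eq_mulVec (horth : IsBlockOrthogonal ℒ p) {n t : ℕ} (ht : t ≤ n)
    {c : ∀ j, Mon N j → K} (hc : ∀ j < t, c j = 0) (a : Mon N t) :
    ℒ (monomial a.1 1 * ∑ j ∈ range (n + 1), ∑ b, c j b • p j b) =
      (leadingGram ℒ p t).mulVec (c t) a := by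
  simp only [mul_sum, mul_smul_comm, map_sum, map_smul, smul_eq_mul]
  rw [sum_eq_single_of_mem t (mem_range.mpr (by omega))]
  · exact sum_congr rfl fun b _ => mul_comm _ _
  · intro j _ hjt
    rcases lt_or_gt_of_ne hjt with hj | hj
    · simp [hc j hj]
    · simp [horth t j hj a.1 a.2]

lemma coeffs_eq_zero (horth : IsBlockOrthogonal ℒ p) (hlead : ∀ n, IsUnit (leadingGram ℒ p n))
    {n T : ℕ} {c : ∀ j, Mon N j → K}
    (hT : ∀ α, tdeg α < T → ℒ (monomial α 1 * ∑ j ∈ range (n + 1), ∑ b, c j b • p j b) = 0) :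
    ∀ t < T, t ≤ n → c t = 0 := by
  intro t
  induction t using Nat.strong_induction_on with
  | _ t ih =>
    intro htT htn
    refine Matrix.mulVec_injective_of_isUnit (hlead t) ?_
    rw [Matrix.mulVec_zero]
    funext a
    rw [← map_monomial_mul_sum_eq_mulVec horth htn (fun j hj => ih j hj (by omega) (by omega))]
    exact hT a.1 (a.2.trans_lt htT)

lemma coeffs_eq_of_sum_eq (horth : IsBlockOrthogonal ℒ p) (hlead : ∀ n, IsUnit (leadingGram ℒ p n))
    {n : ℕ} {c c' : ∀ j, Mon N j → K}
    (h : ∑ j ∈ range (n + 1), ∑ b, c j b • p j b = ∑ j ∈ range (n + 1), ∑ b, c' j b • p j b) :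
    ∀ t ≤ n, c t = c' t := by
  have hdiff := coeffs_eq_zero horth hlead (n := n) (T := n + 1) (c := c - c') fun α _ => by
    simp only [Pi.sub_apply, sub_smul, sum_sub_distrib, h, sub_self, mul_zero, map_zero]
  exact fun t ht => sub_eq_zero.mp (hdiff t (by omega) ht)

lemma map_sum_mul_eq (hdeg : ∀ k a, p k a ∈ restrictTDeg K N k) (horth : IsBlockOrthogonal ℒ p)
    {n : ℕ} {c : ∀ j, Mon N j → K} (hc : ∀ j, n < j → c j = 0) {k : ℕ} (b : Mon N k) :
    ℒ ((∑ j ∈ range (n + 1), ∑ a, c j a • p j a) * p k b) = ∑ a, c k a * ℒ (p k a * p k b) := by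
  simp only [sum_mul, smul_mul_assoc, map_sum, map_smul, smul_eq_mul]
  refine sum_eq_single k (fun j _ hjk => ?_) fun hk => ?_
  · simp [map_mul_eq_zero_of_ne hdeg horth hjk]
  · simp [hc k (by simpa using hk)]

variable (p) in
/-- `M n' j` is the block `M^{j - n'}_{n'}` of the recurrence `X s * p_{n'} = ∑ⱼ M n' j p_j`. -/
def IsRecurrenceCoeffs (s : GIdx N) (M : (n' j : ℕ) → Matrix (Mon N n') (Mon N j) K) : Prop :=
  (∀ n' j : ℕ, (j < n' - s.1 ∨ n' + s.1 < j) → M n' j = 0) ∧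
    ∀ (n' : ℕ) (a : Mon N n'), X s * p n' a = ∑ j ∈ range (n' + s.1 + 1), ∑ b, M n' j a b • p j b

lemma exists_isRecurrenceCoeffs
    (hspan : ∀ n, Submodule.span K {q | ∃ k ≤ n, ∃ a : Mon N k, q = p k a} = restrictTDeg K N n)
    (horth : IsBlockOrthogonal ℒ p) (hlead : ∀ n, IsUnit (leadingGram ℒ p n)) (s : GIdx N) :
    ∃ M, IsRecurrenceCoeffs p s M := by
  have hdeg := mem_restrictTDeg_of_span_eq hspan
  choose c hc_upper hc_eq using fun n' (a : Mon N n') =>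
    exists_coeffs_of_mem_span (p := p) ((hspan _).symm ▸ X_mul_mem_restrictTDeg (hdeg n' a) s)
  refine ⟨fun n' j => Matrix.of fun a => c n' a j, ?_, hc_eq⟩
  rintro n' j (hj | hj) <;> funext a
  · refine coeffs_eq_zero horth hlead (n := n' + s.1) (T := n' - s.1) (fun α hα => ?_) j hj
      (by omega)
    rw [← hc_eq]
    exact map_monomial_mul_X_mul_eq_zero horth s a hα
  · exact hc_upper n' a j hj

lemma IsRecurrenceCoeffs.unique (horth : IsBlockOrthogonal ℒ p)
    (hlead : ∀ n, IsUnit (leadingGram ℒ p n)) {s : GIdx N} {M M'} (hM : IsRecurrenceCoeffs p s M)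
    (hM' : IsRecurrenceCoeffs p s M') : M = M' := by
  funext n' j a
  by_cases hj : j ≤ n' + s.1
  · exact coeffs_eq_of_sum_eq horth hlead ((hM.2 n' a).symm.trans (hM'.2 n' a)) j hj
  · rw [hM.1 n' j (Or.inr (by omega)), hM'.1 n' j (Or.inr (by omega))]

lemma IsRecurrenceCoeffs.mul_gram_eq_gram_mul_transpose (hdeg : ∀ k a, p k a ∈ restrictTDeg K N k)
    (horth : IsBlockOrthogonal ℒ p) {s : GIdx N} {M} (hM : IsRecurrenceCoeffs p s M)
    (n' j : ℕ) (a : Mon N n') (b : Mon N j) :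
    ∑ c, M n' j a c * ℒ (p j c * p j b) = ∑ c, ℒ (p n' a * p n' c) * M j n' b c := by
  have hpair : ∀ (n₁ n₂ : ℕ) (a₁ : Mon N n₁) (b₂ : Mon N n₂),
      ℒ (X s * p n₁ a₁ * p n₂ b₂) = ∑ c, M n₁ n₂ a₁ c * ℒ (p n₂ c * p n₂ b₂) :=
    fun n₁ n₂ a₁ b₂ => by
      rw [hM.2 n₁ a₁]
      exact map_sum_mul_eq hdeg horth (fun j hj => congrFun (hM.1 n₁ j (Or.inr hj)) a₁) b₂
  calc ∑ c, M n' j a c * ℒ (p j c * p j b)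
      = ℒ (X s * p j b * p n' a) := by rw [← hpair, mul_right_comm]
    _ = ∑ c, ℒ (p n' a * p n' c) * M j n' b c := by
        rw [hpair]
        exact sum_congr rfl fun c _ => by rw [mul_comm, mul_comm (p n' c)]

end BlockOrthogonal

theorem graded_recurrence_general (N : ℕ → ℕ)
    [∀ n, Fintype (Mon N n)]
    (ℒ : MvPolynomial (GIdx N) ℝ →ₗ[ℝ] ℝ)
    (p : (n : ℕ) → Mon N n → MvPolynomial (GIdx N) ℝ)
    -- `p_n`, together with the lower blocks, spans the polynomials of total degree `≤ n`
    (hspan : ∀ n : ℕ,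
      Submodule.span ℝ {q | ∃ k ≤ n, ∃ a : Mon N k, q = p k a} =
      Submodule.span ℝ
        {q | ∃ α : GIdx N →₀ ℕ, tdeg α ≤ n ∧ q = MvPolynomial.monomial α (1 : ℝ)})
    -- block orthogonality: `(w_m, p_nᵀ) = 0` for `m < n`
    (horth : ∀ m n : ℕ, m < n → ∀ α : GIdx N →₀ ℕ, tdeg α = m →
      ∀ a : Mon N n, ℒ (MvPolynomial.monomial α (1 : ℝ) * p n a) = 0)
    -- `(w_n, p_nᵀ)` is invertible
    (hlead : ∀ n : ℕ,
      IsUnit (Matrix.of fun a b : Mon N n => ℒ (MvPolynomial.monomial a.1 (1 : ℝ) * p n b))) :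
    ∀ s : GIdx N,
      (∃! M : (n' j : ℕ) → Matrix (Mon N n') (Mon N j) ℝ,
        (∀ n' j : ℕ, (j < n' - s.1 ∨ n' + s.1 < j) → M n' j = 0) ∧
        (∀ (n' : ℕ) (a : Mon N n'),
          MvPolynomial.X s * p n' a =
            ∑ j ∈ Finset.range (n' + s.1 + 1), ∑ b : Mon N j, M n' j a b • p j b)) ∧
      (∀ M : (n' j : ℕ) → Matrix (Mon N n') (Mon N j) ℝ,
        ((∀ n' j : ℕ, (j < n' - s.1 ∨ n' + s.1 < j) → M n' j = 0) ∧
         (∀ (n' : ℕ) (a : Mon N n'),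
          MvPolynomial.X s * p n' a =
            ∑ j ∈ Finset.range (n' + s.1 + 1), ∑ b : Mon N j, M n' j a b • p j b)) →
        -- `M_{n'}^j H_j = H_{n'} (M_j^{n'})ᵀ`, where `H_n = ℒ(p_n p_nᵀ)`
        ∀ (n' j : ℕ) (a : Mon N n') (b : Mon N j),
          ∑ c : Mon N j, M n' j a c * ℒ (p j c * p j b) =
          ∑ c : Mon N n', ℒ (p n' a * p n' c) * M j n' b c) := by
  intro s
  obtain ⟨M₀, hM₀⟩ := exists_isRecurrenceCoeffs hspan horth hlead s
  exact ⟨⟨M₀, hM₀, fun M hM => IsRecurrenceCoeffs.unique horth hlead hM hM₀⟩,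
    fun M hM => IsRecurrenceCoeffs.mul_gram_eq_gram_mul_transpose
      (mem_restrictTDeg_of_span_eq hspan) horth hM⟩

/-- graded recurrence relation.  For a quasi-definite `ℒ` and a
block-orthogonal system `{p_n}`, each generator `w_{m,i}` satisfies a `(2m+1)`-term
recurrence `w_{m,i}·p_{n'} = Σ_{j=n'-m}^{n'+m} M_{n'}^j p_j` with unique matrices, and
these matrices satisfy `M_{n'}^j H_j = H_{n'} (M_j^{n'})ᵀ`. -/
theorem graded_recurrence (N : ℕ → ℕ) (hN0 : N 0 = 0)
    [∀ n, Fintype (Mon N n)]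
    (ℒ : MvPolynomial (GIdx N) ℝ →ₗ[ℝ] ℝ) (hqd : QuasiDefinite ℒ)
    (p : (n : ℕ) → Mon N n → MvPolynomial (GIdx N) ℝ)
    -- `p_n`, together with the lower blocks, spans the polynomials of total degree `≤ n`
    (hspan : ∀ n : ℕ,
      Submodule.span ℝ {q | ∃ k ≤ n, ∃ a : Mon N k, q = p k a} =
      Submodule.span ℝ
        {q | ∃ α : GIdx N →₀ ℕ, tdeg α ≤ n ∧ q = MvPolynomial.monomial α (1 : ℝ)})
    -- block orthogonality: `(w_m, p_nᵀ) = 0` for `m < n`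
    (horth : ∀ m n : ℕ, m < n → ∀ α : GIdx N →₀ ℕ, tdeg α = m →
      ∀ a : Mon N n, ℒ (MvPolynomial.monomial α (1 : ℝ) * p n a) = 0)
    -- `(w_n, p_nᵀ)` is invertible
    (hlead : ∀ n : ℕ,
      IsUnit (Matrix.of fun a b : Mon N n => ℒ (MvPolynomial.monomial a.1 (1 : ℝ) * p n b))) :
    ∀ s : GIdx N,
      (∃! M : (n' j : ℕ) → Matrix (Mon N n') (Mon N j) ℝ,
        (∀ n' j : ℕ, (j < n' - s.1 ∨ n' + s.1 < j) → M n' j = 0) ∧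
        (∀ (n' : ℕ) (a : Mon N n'),
          MvPolynomial.X s * p n' a =
            ∑ j ∈ Finset.range (n' + s.1 + 1), ∑ b : Mon N j, M n' j a b • p j b)) ∧
      (∀ M : (n' j : ℕ) → Matrix (Mon N n') (Mon N j) ℝ,
        ((∀ n' j : ℕ, (j < n' - s.1 ∨ n' + s.1 < j) → M n' j = 0) ∧
         (∀ (n' : ℕ) (a : Mon N n'),
          MvPolynomial.X s * p n' a =
            ∑ j ∈ Finset.range (n' + s.1 + 1), ∑ b : Mon N j, M n' j a b • p j b)) →
        -- `M_{n'}^j H_j = H_{n'} (M_j^{n'})ᵀ`, where `H_n = ℒ(p_n p_nᵀ)`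
        ∀ (n' j : ℕ) (a : Mon N n') (b : Mon N j),
          ∑ c : Mon N j, M n' j a c * ℒ (p j c * p j b) =
          ∑ c : Mon N n', ℒ (p n' a * p n' c) * M j n' b c) :=
  graded_recurrence_general N ℒ p hspan horth hlead
end

section
/- (Graded Favard theorem, positive-definite case.) Let {p̃_n}_{n≥0} be a sequence with p̃_n a column vector of r_n elements of Sym(W), p̃_0 = 1. There exists a positive-definite linear functional ℒ making {p̃_n} an orthonormal basis if and only if the p̃_n satisfy the symmetric recurrence w_{m,i}·p̃_{n−m} = Σ_{k=0}^m M^k_{n,m,i} p̃_{n−m+k} + Σ_{k=1}^m (M^k_{n−k,m,i})^T p̃_{n−m−k} with the matrices A_{n,m,i} = M^m_{n,m,i} of rank r_{n−m} and the stacked matrix A_n of full column rank r_n. -/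
/-!
Write `w` for a variable of degree `m` (degrees are weighted).

If `ℒ` makes `p̃` orthonormal, then `p̃` is a basis in which `ℒ (q * p̃_j)` is the
`p̃_j`-coordinate of `q`. Expanding `w p̃_n` gives the recurrence with
`M^k_n = ℒ (w p̃_n p̃_{n+k}ᵀ)`; the coefficient of `p̃_{n-k}` is `(M^k_{n-k})ᵀ` since
`ℒ (w p̃_n p̃_{n-k}ᵀ)` is the transpose of `ℒ (w p̃_{n-k} p̃_nᵀ)`, and lower ones vanish by
degree. A kernel vector of `A_{n,m,i}ᵀ` gives `q` of degree `n` with `w q` of degree `< n + m`,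
impossible. A kernel vector of the joint matrix `A_n` gives `q ∈ span p̃_n` orthogonal to
`w · span p̃_{n-m}` for every `w`, hence to every polynomial of degree `≤ n` (each monomial of
degree `n` is `w` times one of degree `n - m`), so `ℒ (q²) = 0`.

Conversely, read modulo degree `≤ n`, the recurrences for `w p̃_{n-m}` say `A_n p̃_n ≡ 0`, and
`A_n` is injective; so by induction `span {p̃_k : k ≤ n}` is the space of polynomials of degree
`≤ n`, and counting dimensions `p̃` is a basis. Let `ℒ` be the coordinate along `p̃_0 = 1`.
For `k ≤ n`, computing `ℒ (p̃_n · w p̃_{k-m}ᵀ)` once through the recurrence for `w p̃_{k-m}` and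
once through that for `w p̃_n` gives `A_k ℒ (p̃_k p̃_nᵀ) = A_k δ_{nk}` by induction on `k`, hence
orthonormality; the basis `p̃` then witnesses positive definiteness.
-/

open scoped Classical

def PositiveDefinite {N : ℕ → ℕ} (ℒ : MvPolynomial (GIdx N) ℝ →ₗ[ℝ] ℝ) : Prop :=
  ∃ (ι : Type) (b : Module.Basis ι ℝ (MvPolynomial (GIdx N) ℝ)),
    (∀ i j, i ≠ j → ℒ (b i * b j) = 0) ∧ ∀ i, 0 < ℒ (b i * b i)

section
variable (N : ℕ → ℕ) [∀ k, Fintype (Mon N k)]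

/-- The symmetric recurrence of an orthonormal system for the generator `s = w_{m,i}`:
`w_{m,i}·p̃_{n'} = Σ_{k=0}^m M^k_{n'} p̃_{n'+k} + Σ_{k=1}^m (M^k_{n'-k})ᵀ p̃_{n'-k}`,
the matrices `M n' j` being supported on the band `n' ≤ j ≤ n' + m`. -/
def RecurrenceON (p : (n : ℕ) → Mon N n → MvPolynomial (GIdx N) ℝ)
    (s : GIdx N) (M : (n' j : ℕ) → Matrix (Mon N n') (Mon N j) ℝ) : Prop :=
  (∀ n' j : ℕ, (j < n' ∨ n' + s.1 < j) → M n' j = 0) ∧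
  (∀ (n' : ℕ) (a : Mon N n'),
    MvPolynomial.X s * p n' a =
      (∑ j ∈ Finset.Icc n' (n' + s.1), ∑ b : Mon N j, M n' j a b • p j b) +
      ∑ k ∈ Finset.Icc 1 (min s.1 n'), ∑ b : Mon N (n' - k), M (n' - k) n' b a • p (n' - k) b)

/-- The rank conditions on `A_{n,m,i} = M_{n'}^{n'+m}` and the stacked joint matrix. -/
def RankCondON (s : GIdx N) (M : (n' j : ℕ) → Matrix (Mon N n') (Mon N j) ℝ) : Prop :=
  ∀ n' : ℕ, (M n' (n' + s.1)).rank = Fintype.card (Mon N n')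

def JointRankCondON (MM : (s : GIdx N) → (n' j : ℕ) → Matrix (Mon N n') (Mon N j) ℝ) :
    Prop :=
  ∀ n : ℕ, 1 ≤ n →
    Matrix.rank (fun (r : Σ s : GIdx N, Mon N (n - s.1)) (b : Mon N n) =>
        if r.1.1 ≤ n then MM r.1 (n - r.1.1) n r.2 b else 0) = Fintype.card (Mon N n)

end

theorem Matrix.rank_eq_card_iff_linearIndependent_col {m n K : Type*} [Field K] [Fintype n]
    (A : Matrix m n K) : A.rank = Fintype.card n ↔ LinearIndependent K A.col := by
  rw [Matrix.rank_eq_finrank_span_cols, linearIndependent_iff_card_eq_finrank_span, Set.finrank,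
    eq_comm]

theorem Matrix.eq_zero_of_forall_sum_smul_eq_zero {ρ κ K V : Type*} [Fintype κ] [Field K]
    [AddCommGroup V] [Module K V] {A : Matrix ρ κ K} (hA : LinearIndependent K A.col)
    {x : κ → V} (hx : ∀ r, ∑ c, A r c • x c = 0) : x = 0 := by
  funext c
  rw [Pi.zero_apply, ← Module.forall_dual_apply_eq_zero_iff K]
  intro φ
  refine Fintype.linearIndependent_iff.1 hA (fun c => φ (x c)) ?_ c
  funext r
  simpa [mul_comm] using congrArg φ (hx r)

theorem LinearIndepOn.of_span_image_eq {ι K M : Type*} [Field K] [AddCommGroup M] [Module K M]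
    {v w : ι → M} {t : Finset ι} (hv : LinearIndepOn K v t)
    (h : Submodule.span K (v '' t) = Submodule.span K (w '' t)) : LinearIndepOn K w t := by
  rw [LinearIndepOn, linearIndependent_iff_card_eq_finrank_span, Set.finrank] at hv ⊢
  rwa [← Set.image_eq_range, ← h, Set.image_eq_range]

theorem Module.Basis.repr_sum_smul_apply {ι R M : Type*} [DecidableEq ι] [Semiring R]
    [AddCommMonoid M] [Module R M] (B : Module.Basis ι R M) (t : Finset ι) (c : ι → R) (j : ι) :
    B.repr (∑ i ∈ t, c i • B i) j = if j ∈ t then c j else 0 := by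
  simp [Finsupp.single_apply]

namespace GradedFavard

open MvPolynomial Finset

variable {N : ℕ → ℕ}

theorem tdeg_eq_weight (α : GIdx N →₀ ℕ) : tdeg α = Finsupp.weight (fun s : GIdx N => s.1) α := by
  simp only [tdeg, Finsupp.weight_apply, smul_eq_mul, mul_comm]

theorem tdeg_single_add (s : GIdx N) (α : GIdx N →₀ ℕ) :
    tdeg (Finsupp.single s 1 + α) = s.1 + tdeg α := by
  simp [tdeg_eq_weight, Finsupp.weight_single]

theorem one_le_fst (hN0 : N 0 = 0) (s : GIdx N) : 1 ≤ s.1 := by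
  obtain ⟨_ | m, i⟩ := s
  · exact (Fin.cast hN0 i).elim0
  · exact m.succ_pos

theorem eq_zero_of_tdeg_eq_zero (hN0 : N 0 = 0) {α : GIdx N →₀ ℕ} (h : tdeg α = 0) : α = 0 := by
  have := Finsupp.nonTorsionWeight_of ℕ (fun s : GIdx N => s.1) fun s =>
    Nat.one_le_iff_ne_zero.1 (one_le_fst hN0 s)
  rwa [tdeg_eq_weight, Finsupp.weight_eq_zero_iff_eq_zero] at h

noncomputable def Mon.zero : Mon N 0 := ⟨0, by simp [tdeg]⟩

theorem Mon.eq_zero (hN0 : N 0 = 0) (a : Mon N 0) : a = Mon.zero :=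
  Subtype.ext (eq_zero_of_tdeg_eq_zero hN0 a.2)

noncomputable def degLE (N : ℕ → ℕ) (n : ℕ) : Submodule ℝ (MvPolynomial (GIdx N) ℝ) :=
  Submodule.span ℝ {q | ∃ α : GIdx N →₀ ℕ, tdeg α ≤ n ∧ q = monomial α (1 : ℝ)}

theorem degLE_eq_restrictSupport (n : ℕ) :
    degLE N n = restrictSupport ℝ {α | tdeg α ≤ n} := by
  rw [degLE, restrictSupport_eq_span]
  congr 1
  ext q
  simp [eq_comm]

theorem mem_degLE_iff {n : ℕ} {q : MvPolynomial (GIdx N) ℝ} :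
    q ∈ degLE N n ↔ ∀ α ∈ q.support, tdeg α ≤ n := by
  rw [degLE_eq_restrictSupport, mem_restrictSupport_iff]
  rfl

theorem monomial_mem_degLE {n : ℕ} {α : GIdx N →₀ ℕ} (h : tdeg α ≤ n) :
    monomial α (1 : ℝ) ∈ degLE N n :=
  Submodule.subset_span ⟨α, h, rfl⟩

theorem degLE_mono : Monotone (degLE N) := fun _ _ h _ hq =>
  mem_degLE_iff.2 fun α hα => (mem_degLE_iff.1 hq α hα).trans h

theorem exists_mem_degLE (q : MvPolynomial (GIdx N) ℝ) : ∃ n, q ∈ degLE N n :=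
  ⟨q.support.sup tdeg, mem_degLE_iff.2 fun _ hα => Finset.le_sup hα⟩

theorem X_mul_mem_degLE_iff {s : GIdx N} {m : ℕ} {q : MvPolynomial (GIdx N) ℝ} :
    X s * q ∈ degLE N m ↔ ∀ α ∈ q.support, s.1 + tdeg α ≤ m := by
  simp [mem_degLE_iff, support_X_mul, tdeg_single_add]

theorem X_mul_mem_degLE {s : GIdx N} {n : ℕ} {q : MvPolynomial (GIdx N) ℝ} (hq : q ∈ degLE N n) :
    X s * q ∈ degLE N (n + s.1) :=
  X_mul_mem_degLE_iff.2 fun α hα => by have := mem_degLE_iff.1 hq α hα; omega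

theorem degLE_zero (hN0 : N 0 = 0) : degLE N 0 = Submodule.span ℝ {1} := by
  refine le_antisymm (Submodule.span_le.2 ?_) (Submodule.span_le.2 ?_)
  · rintro _ ⟨α, hα, rfl⟩
    rw [eq_zero_of_tdeg_eq_zero hN0 (Nat.le_zero.1 hα), ← one_def]
    exact Submodule.mem_span_singleton_self 1
  · rw [Set.singleton_subset_iff, SetLike.mem_coe, one_def]
    exact monomial_mem_degLE (by simp [tdeg])

theorem degLE_le_sup {n : ℕ} (hn : 1 ≤ n) :
    degLE N n ≤ degLE N (n - 1) ⊔
      Submodule.span ℝ {q | ∃ s : GIdx N, s.1 ≤ n ∧ ∃ u ∈ degLE N (n - s.1), q = X s * u} := by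
  refine Submodule.span_le.2 ?_
  rintro _ ⟨α, hα, rfl⟩
  rcases hα.lt_or_eq with hlt | rfl
  · exact Submodule.mem_sup_left (monomial_mem_degLE (by omega))
  obtain ⟨s, hs⟩ : α.support.Nonempty := by
    rw [Finsupp.support_nonempty_iff]
    rintro rfl
    simp [tdeg] at hn
  have hsα := Finsupp.mem_support_iff.1 hs
  have hdeg := Finsupp.weight_sub_single_add (w := fun s : GIdx N => s.1) hsα
  rw [← tdeg_eq_weight, ← tdeg_eq_weight] at hdeg
  refine Submodule.mem_sup_right (Submodule.subset_span ⟨s, by omega, _,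
    monomial_mem_degLE (α := α - Finsupp.single s 1) (by omega), ?_⟩)
  rw [X, monomial_mul, one_mul, add_comm, Finsupp.sub_add_single_one_cancel hsα]

section Orthonormal

variable {ι K A : Type*} [DecidableEq ι] [CommRing K] [Ring A] [Algebra K A]

def IsOrthonormal (ℒ : A →ₗ[K] K) (v : ι → A) : Prop :=
  ∀ i j, ℒ (v i * v j) = if i = j then 1 else 0

theorem IsOrthonormal.linearIndependent {ℒ : A →ₗ[K] K} {v : ι → A} (h : IsOrthonormal ℒ v) :
    LinearIndependent K v := by
  rw [linearIndependent_iff']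
  intro t g hg i hi
  rw [IsOrthonormal] at h
  simpa [Finset.sum_mul, h, hi] using congrArg (fun q => ℒ (q * v i)) hg

theorem apply_mul_eq_repr (B : Module.Basis ι K A) {v : ι → A} (hB : ⇑B = v)
    {ℒ : A →ₗ[K] K} {j : ι} (h : ∀ i, ℒ (v i * v j) = if i = j then 1 else 0) (q : A) :
    ℒ (q * v j) = B.repr q j := by
  subst hB
  have : ℒ ∘ₗ LinearMap.mulRight K (B j) = B.coord j :=
    B.ext fun i => by simp [h, Finsupp.single_apply]
  exact LinearMap.congr_fun this q

theorem isOrthonormal_sigma_iff {κ : Type*} {β : κ → Type*} [DecidableEq κ]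
    [∀ k, DecidableEq (β k)] {ℒ : A →ₗ[K] K} {v : (k : κ) → β k → A} :
    IsOrthonormal ℒ (Sigma.uncurry v) ↔
      (∀ k (a b : β k), ℒ (v k a * v k b) = if a = b then 1 else 0) ∧
        ∀ k l, k ≠ l → ∀ (a : β k) (b : β l), ℒ (v k a * v l b) = 0 := by
  refine ⟨fun h => ⟨fun k a b => by simpa [Sigma.uncurry] using h ⟨k, a⟩ ⟨k, b⟩,
    fun k l hkl a b => by simpa [Sigma.uncurry, hkl] using h ⟨k, a⟩ ⟨l, b⟩⟩, ?_⟩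
  rintro ⟨hdiag, hoff⟩ ⟨k, a⟩ ⟨l, b⟩
  by_cases hkl : k = l
  · subst hkl
    simpa [Sigma.uncurry] using hdiag k a b
  · simpa [Sigma.uncurry, hkl] using hoff k l hkl a b

end Orthonormal

noncomputable def pSpan (p : (n : ℕ) → Mon N n → MvPolynomial (GIdx N) ℝ) (n : ℕ) :
    Submodule ℝ (MvPolynomial (GIdx N) ℝ) :=
  Submodule.span ℝ {q | ∃ k ≤ n, ∃ a : Mon N k, q = p k a}

def level (N : ℕ → ℕ) [∀ k, Fintype (Mon N k)] (n : ℕ) : Finset (Σ k, Mon N k) :=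
  (range (n + 1)).sigma fun _ => univ

section Families

variable (p : (n : ℕ) → Mon N n → MvPolynomial (GIdx N) ℝ)

theorem mem_pSpan {k n : ℕ} (h : k ≤ n) (a : Mon N k) : p k a ∈ pSpan p n :=
  Submodule.subset_span ⟨k, h, a, rfl⟩

theorem pSpan_le_iff {n : ℕ} {W : Submodule ℝ (MvPolynomial (GIdx N) ℝ)} :
    pSpan p n ≤ W ↔ ∀ k ≤ n, ∀ a : Mon N k, p k a ∈ W := by
  rw [pSpan, Submodule.span_le]
  exact ⟨fun h k hk a => h ⟨k, hk, a, rfl⟩, fun h _ ⟨k, hk, a, hq⟩ => hq ▸ h k hk a⟩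

theorem pSpan_mono : Monotone (pSpan p) := fun _ _ h =>
  (pSpan_le_iff p).2 fun _ hk a => mem_pSpan p (hk.trans h) a

theorem linearIndependent_monomial_sigma :
    LinearIndependent ℝ fun i : Σ k, Mon N k => monomial i.2.1 (1 : ℝ) :=
  (basisMonomials (GIdx N) ℝ).linearIndependent.comp _
    (Equiv.sigmaFiberEquiv (tdeg (N := N))).injective

variable [∀ k, Fintype (Mon N k)]

@[simp] theorem mem_level {n : ℕ} {i : Σ k, Mon N k} : i ∈ level N n ↔ i.1 ≤ n := by
  simp [level]

theorem pSpan_eq_span_image (n : ℕ) :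
    pSpan p n = Submodule.span ℝ (Sigma.uncurry p '' ↑(level N n)) := by
  rw [pSpan]
  congr 1
  ext q
  simp [Sigma.uncurry, eq_comm]

theorem degLE_eq_span_image (n : ℕ) :
    degLE N n =
      Submodule.span ℝ ((fun i : Σ k, Mon N k => monomial i.2.1 (1 : ℝ)) '' ↑(level N n)) := by
  rw [degLE]
  congr 1
  ext q
  simp only [Set.mem_ofPred_eq, Set.mem_image, Finset.mem_coe, mem_level, Sigma.exists]
  constructor
  · rintro ⟨α, hα, rfl⟩
    exact ⟨tdeg α, ⟨α, rfl⟩, hα, rfl⟩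
  · rintro ⟨k, α, hk, rfl⟩
    exact ⟨α.1, α.2.trans_le hk, rfl⟩

theorem top_le_span_of_pSpan_eq (hspan : ∀ n, pSpan p n = degLE N n) :
    ⊤ ≤ Submodule.span ℝ (Set.range (Sigma.uncurry p)) := by
  intro q _
  obtain ⟨n, hq⟩ := exists_mem_degLE q
  rw [← hspan, pSpan_eq_span_image] at hq
  exact Submodule.span_mono (Set.image_subset_range _ _) hq

noncomputable def recurrenceRHS (M : (n' j : ℕ) → Matrix (Mon N n') (Mon N j) ℝ) (m n : ℕ)
    (a : Mon N n) : MvPolynomial (GIdx N) ℝ :=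
  (∑ j ∈ Icc n (n + m), ∑ b : Mon N j, M n j a b • p j b) +
    ∑ k ∈ Icc 1 (min m n), ∑ b : Mon N (n - k), M (n - k) n b a • p (n - k) b

theorem recurrenceRHS_eq_sum_sigma (M : (n' j : ℕ) → Matrix (Mon N n') (Mon N j) ℝ)
    (m n : ℕ) (a : Mon N n) :
    recurrenceRHS p M m n a =
      ∑ i ∈ (Icc n (n + m)).sigma (fun _ => univ), M n i.1 a i.2 • Sigma.uncurry p i +
        ∑ i ∈ (Ico (n - m) n).sigma (fun _ => univ), M i.1 n i.2 a • Sigma.uncurry p i := by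
  rw [recurrenceRHS, sum_sigma, sum_sigma]
  congr 1
  refine sum_nbij' (fun k => n - k) (fun j => n - j) ?_ ?_ ?_ ?_ fun _ _ => rfl <;>
    intro k hk <;> simp only [mem_Icc, mem_Ico] at hk ⊢ <;>
    omega

theorem repr_recurrenceRHS (B : Module.Basis (Σ k, Mon N k) ℝ (MvPolynomial (GIdx N) ℝ))
    (hB : ⇑B = Sigma.uncurry p) (M : (n' j : ℕ) → Matrix (Mon N n') (Mon N j) ℝ)
    (m n : ℕ) (a : Mon N n) (j : ℕ) (c : Mon N j) :
    B.repr (recurrenceRHS p M m n a) ⟨j, c⟩ =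
      (if j ∈ Icc n (n + m) then M n j a c else 0) +
        (if j ∈ Ico (n - m) n then M j n c a else 0) := by
  rw [recurrenceRHS_eq_sum_sigma, ← hB, map_add, Finsupp.add_apply,
    Module.Basis.repr_sum_smul_apply, Module.Basis.repr_sum_smul_apply]
  simp

end Families

theorem IsOrthonormal.positiveDefinite {ι : Type} [DecidableEq ι]
    {ℒ : MvPolynomial (GIdx N) ℝ →ₗ[ℝ] ℝ} {v : ι → MvPolynomial (GIdx N) ℝ}
    (h : IsOrthonormal ℒ v) (hv : ⊤ ≤ Submodule.span ℝ (Set.range v)) : PositiveDefinite ℒ :=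
  ⟨ι, Module.Basis.mk h.linearIndependent hv, fun i j hij => by simp [h i j, hij],
    fun i => by simp [h i i]⟩

theorem X_mul_mem_pSpan_of_eq {p : (n : ℕ) → Mon N n → MvPolynomial (GIdx N) ℝ}
    (hspan : ∀ n, pSpan p n = degLE N n) (s : GIdx N) {k : ℕ} {u : MvPolynomial (GIdx N) ℝ}
    (hu : u ∈ pSpan p k) : X s * u ∈ pSpan p (k + s.1) := by
  rw [hspan] at hu ⊢
  exact X_mul_mem_degLE hu

noncomputable def recurrenceCoeff (ℒ : MvPolynomial (GIdx N) ℝ →ₗ[ℝ] ℝ)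
    (p : (n : ℕ) → Mon N n → MvPolynomial (GIdx N) ℝ) (s : GIdx N) (n j : ℕ) :
    Matrix (Mon N n) (Mon N j) ℝ :=
  if n ≤ j ∧ j ≤ n + s.1 then Matrix.of fun a b => ℒ (X s * p n a * p j b) else 0

section Forward

variable {p : (n : ℕ) → Mon N n → MvPolynomial (GIdx N) ℝ} {ℒ : MvPolynomial (GIdx N) ℝ →ₗ[ℝ] ℝ}

theorem apply_mul_eq_zero_of_mem_pSpan (hON : IsOrthonormal ℒ (Sigma.uncurry p)) {m j : ℕ}
    (hmj : m < j) {u : MvPolynomial (GIdx N) ℝ} (hu : u ∈ pSpan p m) (b : Mon N j) :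
    ℒ (u * p j b) = 0 := by
  have : pSpan p m ≤ LinearMap.ker (ℒ ∘ₗ LinearMap.mulRight ℝ (p j b)) :=
    (pSpan_le_iff p).2 fun k hk a =>
      (isOrthonormal_sigma_iff.1 hON).2 k j (by omega) a b
  exact this hu

theorem apply_mul_eq_zero_of_forall_X_mul (hspan : ∀ n, pSpan p n = degLE N n) {n : ℕ}
    (hn : 1 ≤ n) {q : MvPolynomial (GIdx N) ℝ}
    (hlow : ∀ k < n, ∀ a : Mon N k, ℒ (p k a * q) = 0)
    (hrow : ∀ s : GIdx N, s.1 ≤ n → ∀ a : Mon N (n - s.1), ℒ (X s * p (n - s.1) a * q) = 0) :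
    ∀ w ∈ degLE N n, ℒ (w * q) = 0 := by
  set K := LinearMap.ker (ℒ ∘ₗ LinearMap.mulRight ℝ q)
  have hlow' : pSpan p (n - 1) ≤ K := (pSpan_le_iff p).2 fun k hk a => hlow k (by omega) a
  suffices degLE N n ≤ K from fun w hw => this hw
  refine (degLE_le_sup hn).trans (sup_le (hspan (n - 1) ▸ hlow') (Submodule.span_le.2 ?_))
  rintro _ ⟨s, hs, u, hu, rfl⟩
  rw [← hspan] at hu
  have : pSpan p (n - s.1) ≤ K.comap (LinearMap.mulLeft ℝ (X s)) :=
    (pSpan_le_iff p).2 fun k hk a => by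
      rcases hk.lt_or_eq with hlt | rfl
      · exact hlow' <| pSpan_mono p (by omega) <|
          X_mul_mem_pSpan_of_eq hspan s (mem_pSpan p le_rfl a)
      · exact hrow s hs a
  exact this hu

variable [∀ k, Fintype (Mon N k)]

theorem apply_sum_smul_mul (hON : IsOrthonormal ℒ (Sigma.uncurry p)) {n : ℕ}
    (g : Mon N n → ℝ) (a : Mon N n) : ℒ ((∑ b, g b • p n b) * p n a) = g a := by
  simp [sum_mul, (isOrthonormal_sigma_iff.1 hON).1]

theorem mem_pSpan_of_forall_apply_mul_eq_zero (hON : IsOrthonormal ℒ (Sigma.uncurry p))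
    (hspan : ∀ n, pSpan p n = degLE N n) {m : ℕ} {u : MvPolynomial (GIdx N) ℝ}
    (h : ∀ j, m < j → ∀ b : Mon N j, ℒ (u * p j b) = 0) : u ∈ pSpan p m := by
  set B := Module.Basis.mk hON.linearIndependent (top_le_span_of_pSpan_eq p hspan)
  have hB : ⇑B = Sigma.uncurry p := Module.Basis.coe_mk _ _
  rw [pSpan_eq_span_image, ← hB, B.mem_span_image]
  rintro ⟨j, b⟩ hi
  by_contra hj
  rw [Finset.mem_coe, mem_level, not_le] at hj
  apply Finsupp.mem_support_iff.1 hi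
  rw [← apply_mul_eq_repr B hB (hON · ⟨j, b⟩)]
  exact h j hj b

theorem recurrenceON_recurrenceCoeff (hON : IsOrthonormal ℒ (Sigma.uncurry p))
    (hspan : ∀ n, pSpan p n = degLE N n) (s : GIdx N) :
    RecurrenceON N p s (recurrenceCoeff ℒ p s) := by
  refine ⟨fun n j hj => if_neg (by omega), fun n a => ?_⟩
  set B := Module.Basis.mk hON.linearIndependent (top_le_span_of_pSpan_eq p hspan)
  have hB : ⇑B = Sigma.uncurry p := Module.Basis.coe_mk _ _
  change X s * p n a = recurrenceRHS p (recurrenceCoeff ℒ p s) s.1 n a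
  refine B.ext_elem_iff.2 fun ⟨j, c⟩ => ?_
  rw [repr_recurrenceRHS p B hB, ← apply_mul_eq_repr B hB (hON · ⟨j, c⟩)]
  change ℒ (X s * p n a * p j c) = _
  simp only [recurrenceCoeff, mem_Icc, mem_Ico]
  split_ifs <;> first | omega | simp only [Matrix.of_apply, add_zero, zero_add]
  · rw [mul_right_comm]
  rcases (by omega : n + s.1 < j ∨ j + s.1 < n) with h | h
  · exact apply_mul_eq_zero_of_mem_pSpan hON h
      (X_mul_mem_pSpan_of_eq hspan s (mem_pSpan p le_rfl a)) c
  · rw [mul_right_comm]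
    exact apply_mul_eq_zero_of_mem_pSpan hON h
      (X_mul_mem_pSpan_of_eq hspan s (mem_pSpan p le_rfl c)) a

theorem rankCondON_recurrenceCoeff (hN0 : N 0 = 0) (hON : IsOrthonormal ℒ (Sigma.uncurry p))
    (hspan : ∀ n, pSpan p n = degLE N n) (s : GIdx N) :
    RankCondON N s (recurrenceCoeff ℒ p s) := by
  intro n
  refine LinearIndependent.rank_matrix (Fintype.linearIndependent_iff.2 fun g hg a => ?_)
  set q := ∑ a, g a • p n a
  have hs := one_le_fst hN0 s
  have hq : q ∈ pSpan p n :=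
    Submodule.sum_mem _ fun a _ => Submodule.smul_mem _ _ (mem_pSpan p le_rfl a)
  have htop : ∀ b, ℒ (X s * q * p (n + s.1) b) = 0 := fun b => by
    have := congrFun hg b
    simpa [q, recurrenceCoeff, mul_sum, sum_mul, mul_assoc] using this
  have hXq : X s * q ∈ degLE N (n + s.1 - 1) := by
    rw [← hspan]
    refine mem_pSpan_of_forall_apply_mul_eq_zero hON hspan fun j hj b => ?_
    rcases (by omega : j = n + s.1 ∨ n + s.1 < j) with rfl | hlt
    · exact htop b
    · exact apply_mul_eq_zero_of_mem_pSpan hON hlt (X_mul_mem_pSpan_of_eq hspan s hq) b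
  have hga : g a = ℒ (q * p n a) := (apply_sum_smul_mul hON g a).symm
  rw [hga]
  rcases n with _ | n
  · have hq0 : q = 0 := by
      rw [← support_eq_empty, Finset.eq_empty_iff_forall_notMem]
      intro α hα
      have := X_mul_mem_degLE_iff.1 hXq α hα
      omega
    rw [hq0, zero_mul, map_zero]
  · have hq' : q ∈ pSpan p n := by
      rw [hspan]
      exact mem_degLE_iff.2 fun α hα => by have := X_mul_mem_degLE_iff.1 hXq α hα; omega
    exact apply_mul_eq_zero_of_mem_pSpan hON n.lt_succ_self hq' a

theorem jointRankCondON_recurrenceCoeff (hON : IsOrthonormal ℒ (Sigma.uncurry p))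
    (hspan : ∀ n, pSpan p n = degLE N n) :
    JointRankCondON N fun s => recurrenceCoeff ℒ p s := by
  intro n hn
  refine (Matrix.rank_eq_card_iff_linearIndependent_col _).2
    (Fintype.linearIndependent_iff.2 fun g hg => ?_)
  set q := ∑ b, g b • p n b
  have hq : q ∈ degLE N n :=
    hspan n ▸ Submodule.sum_mem _ fun b _ => Submodule.smul_mem _ _ (mem_pSpan p le_rfl b)
  have hrow : ∀ s : GIdx N, s.1 ≤ n → ∀ a, ℒ (X s * p (n - s.1) a * q) = 0 := fun s hs a => by
    have : ∑ b, g b * (if s.1 ≤ n then recurrenceCoeff ℒ p s (n - s.1) n a b else 0) = 0 := by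
      have h := congrFun hg ⟨s, a⟩
      simp only [Finset.sum_apply, Pi.smul_apply, smul_eq_mul, Pi.zero_apply] at h
      exact h
    simpa [q, recurrenceCoeff, hs, mul_sum, mul_comm] using this
  have hlow : ∀ k < n, ∀ a : Mon N k, ℒ (p k a * q) = 0 := fun k hk a => by
    simp [q, mul_sum, (isOrthonormal_sigma_iff.1 hON).2 k n hk.ne]
  have hsq : ∑ b, g b * g b = 0 := by
    rw [← apply_mul_eq_zero_of_forall_X_mul hspan hn hlow hrow q hq]
    simp only [q, mul_sum, mul_smul_comm, map_sum, map_smul, apply_sum_smul_mul hON,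
      smul_eq_mul]
  intro b
  exact mul_self_eq_zero.1 <|
    (Finset.sum_eq_zero_iff_of_nonneg fun b _ => mul_self_nonneg (g b)).1 hsq b (mem_univ b)

end Forward

def IsOrthonormalBelow (ℒ : MvPolynomial (GIdx N) ℝ →ₗ[ℝ] ℝ)
    (p : (n : ℕ) → Mon N n → MvPolynomial (GIdx N) ℝ) (k : ℕ) : Prop :=
  ∀ i j : Σ n, Mon N n, j.1 < k →
    ℒ (Sigma.uncurry p i * Sigma.uncurry p j) = if i = j then 1 else 0

section Reverse

variable {p : (n : ℕ) → Mon N n → MvPolynomial (GIdx N) ℝ}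

theorem isOrthonormalBelow_one_coord (hN0 : N 0 = 0) (hp0 : ∀ a : Mon N 0, p 0 a = 1)
    (B : Module.Basis (Σ k, Mon N k) ℝ (MvPolynomial (GIdx N) ℝ)) (hB : ⇑B = Sigma.uncurry p) :
    IsOrthonormalBelow (B.coord ⟨0, Mon.zero⟩) p 1 := by
  rintro i ⟨j, b⟩ hj
  obtain rfl : j = 0 := Nat.lt_one_iff.1 hj
  change B.coord _ (Sigma.uncurry p i * p 0 b) = _
  rw [hp0, mul_one, Mon.eq_zero hN0 b, ← hB]
  simp [Finsupp.single_apply]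

variable [∀ k, Fintype (Mon N k)]

theorem linearIndependent_of_pSpan_eq (hspan : ∀ n, pSpan p n = degLE N n) :
    LinearIndependent ℝ (Sigma.uncurry p) := by
  have hcover : (Set.univ : Set (Σ k, Mon N k)) = ⋃ n, ↑(level N n) :=
    (Set.eq_univ_of_forall fun i => Set.mem_iUnion.2 ⟨i.1, by simp⟩).symm
  rw [← linearIndepOn_univ_iff, hcover]
  refine linearIndepOn_iUnion_of_directed
    (Monotone.directed_le fun m n h i => by simp only [Finset.mem_coe, mem_level]; omega)
    fun n => ?_
  refine (linearIndependent_monomial_sigma.linearIndepOn _).of_span_image_eq ?_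
  rw [← degLE_eq_span_image, ← pSpan_eq_span_image, hspan]

variable {s : GIdx N} {M : (n' j : ℕ) → Matrix (Mon N n') (Mon N j) ℝ}

theorem X_mul_mem_pSpan (hrec : RecurrenceON N p s M) {m : ℕ} {u : MvPolynomial (GIdx N) ℝ}
    (hu : u ∈ pSpan p m) : X s * u ∈ pSpan p (m + s.1) := by
  have : pSpan p m ≤ (pSpan p (m + s.1)).comap (LinearMap.mulLeft ℝ (X s)) :=
    (pSpan_le_iff p).2 fun k hk a => by
      rw [Submodule.mem_comap, LinearMap.mulLeft_apply, hrec.2 k a]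
      refine add_mem (sum_mem fun j hj => sum_mem fun b _ => Submodule.smul_mem _ _ ?_)
        (sum_mem fun i _ => sum_mem fun b _ => Submodule.smul_mem _ _ (mem_pSpan p (by omega) b))
      exact mem_pSpan p (by simp only [mem_Icc] at hj; omega) b
  exact this hu

theorem X_mul_sub_sum_mem_pSpan (hrec : RecurrenceON N p s M) {k : ℕ} (hk : s.1 ≤ k)
    (a : Mon N (k - s.1)) :
    X s * p (k - s.1) a - ∑ c, M (k - s.1) k a c • p k c ∈ pSpan p (k - 1) := by
  have h := hrec.2 (k - s.1) a
  rw [Nat.sub_add_cancel hk] at h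
  rw [h, ← sum_erase_add _ _ (show k ∈ Icc (k - s.1) k by simp), add_right_comm,
    add_sub_cancel_right]
  refine add_mem (sum_mem fun j hj => sum_mem fun b _ => Submodule.smul_mem _ _ ?_)
    (sum_mem fun i hi => sum_mem fun b _ => Submodule.smul_mem _ _ ?_)
  · exact mem_pSpan p (by simp only [mem_erase, mem_Icc] at hj; omega) b
  · exact mem_pSpan p (by simp only [mem_Icc] at hi; omega) b

variable {MM : (s : GIdx N) → (n' j : ℕ) → Matrix (Mon N n') (Mon N j) ℝ}

theorem mem_degLE_of_forall_lt_pSpan_eq (hN0 : N 0 = 0) (hp0 : ∀ a : Mon N 0, p 0 a = 1)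
    (hrec : ∀ s, RecurrenceON N p s (MM s)) (hjoint : JointRankCondON N MM) {n : ℕ}
    (IH : ∀ k < n, pSpan p k = degLE N k) (a : Mon N n) : p n a ∈ degLE N n := by
  rcases Nat.eq_zero_or_pos n with rfl | hn
  · rw [hp0, one_def]
    exact monomial_mem_degLE (by simp [tdeg])
  have hA := (Matrix.rank_eq_card_iff_linearIndependent_col _).1 (hjoint n hn)
  -- Modulo `degLE N n`, the joint matrix kills the vector `(p n b)_b`.
  suffices (fun b => (degLE N n).mkQ (p n b)) = 0 by
    simpa [Submodule.Quotient.mk_eq_zero] using congrFun this a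
  refine Matrix.eq_zero_of_forall_sum_smul_eq_zero hA fun ⟨s, a'⟩ => ?_
  by_cases hs : s.1 ≤ n
  · have hX : X s * p (n - s.1) a' ∈ degLE N n := by
      have := X_mul_mem_degLE (s := s)
        (IH (n - s.1) (by have := one_le_fst hN0 s; omega) ▸ mem_pSpan p le_rfl a')
      rwa [Nat.sub_add_cancel hs] at this
    have hlow : X s * p (n - s.1) a' - ∑ c, MM s (n - s.1) n a' c • p n c ∈ degLE N n :=
      degLE_mono (Nat.sub_le n 1) <|
        IH (n - 1) (by omega) ▸ X_mul_sub_sum_mem_pSpan (hrec s) hs a'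
    have hmem : ∑ c, MM s (n - s.1) n a' c • p n c ∈ degLE N n := by
      simpa using sub_mem hX hlow
    rw [← Submodule.ker_mkQ (degLE N n), LinearMap.mem_ker, map_sum] at hmem
    simpa [hs] using hmem
  · simp [hs]

theorem degLE_le_pSpan_of_forall_lt (hN0 : N 0 = 0) (hp0 : ∀ a : Mon N 0, p 0 a = 1)
    (hrec : ∀ s, RecurrenceON N p s (MM s)) {n : ℕ} (IH : ∀ k < n, pSpan p k = degLE N k) :
    degLE N n ≤ pSpan p n := by
  rcases Nat.eq_zero_or_pos n with rfl | hn
  · rw [degLE_zero hN0, Submodule.span_le, Set.singleton_subset_iff, ← hp0 Mon.zero]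
    exact mem_pSpan p le_rfl _
  refine (degLE_le_sup hn).trans (sup_le ?_ (Submodule.span_le.2 ?_))
  · rw [← IH (n - 1) (by omega)]
    exact pSpan_mono p (Nat.sub_le n 1)
  · rintro _ ⟨s, hs, u, hu, rfl⟩
    rw [← IH (n - s.1) (by have := one_le_fst hN0 s; omega)] at hu
    simpa [Nat.sub_add_cancel hs] using X_mul_mem_pSpan (hrec s) hu

theorem pSpan_eq_degLE (hN0 : N 0 = 0) (hp0 : ∀ a : Mon N 0, p 0 a = 1)
    (hrec : ∀ s, RecurrenceON N p s (MM s)) (hjoint : JointRankCondON N MM) (n : ℕ) :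
    pSpan p n = degLE N n := by
  induction n using Nat.strong_induction_on with
  | _ n IH =>
    refine le_antisymm ((pSpan_le_iff p).2 fun k hk a => degLE_mono hk ?_)
      (degLE_le_pSpan_of_forall_lt hN0 hp0 hrec IH)
    exact mem_degLE_of_forall_lt_pSpan_eq hN0 hp0 hrec hjoint (fun j hj => IH j (by omega)) a

variable {ℒ : MvPolynomial (GIdx N) ℝ →ₗ[ℝ] ℝ}
  (B : Module.Basis (Σ k, Mon N k) ℝ (MvPolynomial (GIdx N) ℝ))

theorem sum_mul_apply_mul_eq_repr (hB : ⇑B = Sigma.uncurry p) (hrec : RecurrenceON N p s M)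
    {k n : ℕ} (hkn : k ≤ n) (hs : s.1 ≤ k) (hs1 : 1 ≤ s.1) (IH : IsOrthonormalBelow ℒ p k)
    (a : Mon N n) (a' : Mon N (k - s.1)) :
    ∑ c, M (k - s.1) k a' c * ℒ (p n a * p k c) = B.repr (X s * p n a) ⟨k - s.1, a'⟩ := by
  have hlow : pSpan p (k - 1) ≤ LinearMap.ker (ℒ ∘ₗ LinearMap.mulLeft ℝ (p n a)) :=
    (pSpan_le_iff p).2 fun j hj c => by
      simpa [Sigma.uncurry, show n ≠ j by omega] using IH ⟨n, a⟩ ⟨j, c⟩ (show j < k by omega)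
  calc ∑ c, M (k - s.1) k a' c * ℒ (p n a * p k c)
      = ℒ (p n a * ∑ c, M (k - s.1) k a' c • p k c) := by simp [mul_sum]
    _ = ℒ (p n a * (X s * p (k - s.1) a')) := by
        rw [eq_comm, ← sub_eq_zero, ← map_sub, ← mul_sub]
        exact hlow (X_mul_sub_sum_mem_pSpan hrec hs a')
    _ = ℒ (X s * p n a * p (k - s.1) a') := by rw [mul_left_comm, mul_assoc]
    _ = B.repr (X s * p n a) ⟨k - s.1, a'⟩ :=
        apply_mul_eq_repr B hB (fun i => IH i ⟨k - s.1, a'⟩ (show k - s.1 < k by omega)) _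

theorem apply_mul_eq_ite_of_le (hN0 : N 0 = 0) (hB : ⇑B = Sigma.uncurry p)
    (hrec : ∀ s, RecurrenceON N p s (MM s)) (hjoint : JointRankCondON N MM) {k : ℕ} (hk : 1 ≤ k)
    (IH : IsOrthonormalBelow ℒ p k) {n : ℕ} (hkn : k ≤ n) (a : Mon N n) (b : Mon N k) :
    ℒ (p n a * p k b) = if (⟨n, a⟩ : Σ n, Mon N n) = ⟨k, b⟩ then 1 else 0 := by
  have hA := (Matrix.rank_eq_card_iff_linearIndependent_col _).1 (hjoint k hk)
  -- The joint matrix is injective and sends `ℒ (p n a * p k ·)` and the Kronecker delta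
  -- to the same vector.
  refine sub_eq_zero.1 (congrFun (Matrix.eq_zero_of_forall_sum_smul_eq_zero hA
    (x := fun c => ℒ (p n a * p k c) - if (⟨n, a⟩ : Σ n, Mon N n) = ⟨k, c⟩ then 1 else 0)
    fun ⟨s, a'⟩ => ?_) b)
  by_cases hs : s.1 ≤ k
  · have hs1 := one_le_fst hN0 s
    simp only [if_pos hs, smul_eq_mul, mul_sub, sum_sub_distrib, sub_eq_zero]
    rw [sum_mul_apply_mul_eq_repr B hB (hrec s) hkn hs hs1 IH,
      show X s * p n a = recurrenceRHS p (MM s) s.1 n a from (hrec s).2 n a,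
      repr_recurrenceRHS p B hB]
    rcases hkn.lt_or_eq with hlt | rfl
    · rw [if_neg (by simp only [mem_Icc]; omega), if_neg (by simp only [mem_Ico]; omega)]
      simp [hlt.ne']
    · rw [if_neg (by simp only [mem_Icc]; omega), if_pos (by simp only [mem_Ico]; omega)]
      simp
  · simp [hs]

theorem IsOrthonormalBelow.succ (hN0 : N 0 = 0) (hB : ⇑B = Sigma.uncurry p)
    (hrec : ∀ s, RecurrenceON N p s (MM s)) (hjoint : JointRankCondON N MM) {k : ℕ} (hk : 1 ≤ k)
    (IH : IsOrthonormalBelow ℒ p k) : IsOrthonormalBelow ℒ p (k + 1) := by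
  rintro ⟨n, a⟩ ⟨j, b⟩ hj
  rcases (Nat.lt_succ_iff.1 hj).lt_or_eq with hjk | rfl
  · exact IH _ _ hjk
  rcases lt_or_ge n j with hnj | hjn
  · rw [mul_comm, IH ⟨j, b⟩ ⟨n, a⟩ hnj]
    simp [hnj.ne, hnj.ne']
  · exact apply_mul_eq_ite_of_le B hN0 hB hrec hjoint hk IH hjn a b

theorem isOrthonormal_coord (hN0 : N 0 = 0) (hp0 : ∀ a : Mon N 0, p 0 a = 1)
    (hrec : ∀ s, RecurrenceON N p s (MM s)) (hjoint : JointRankCondON N MM)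
    (hB : ⇑B = Sigma.uncurry p) : IsOrthonormal (B.coord ⟨0, Mon.zero⟩) (Sigma.uncurry p) := by
  have h : ∀ k, IsOrthonormalBelow (B.coord ⟨0, Mon.zero⟩) p (k + 1) := fun k => by
    induction k with
    | zero => exact isOrthonormalBelow_one_coord hN0 hp0 B hB
    | succ k IH => exact IH.succ B hN0 hB hrec hjoint k.succ_pos
  exact fun i j => h j.1 i j j.1.lt_succ_self

end Reverse

end GradedFavard

section
variable (N : ℕ → ℕ) [∀ k, Fintype (Mon N k)]

/-- Favard's theorem, positive-definite case: existence of a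
positive-definite linear functional making `{p̃_n}` an orthonormal basis is equivalent to
the symmetric banded recurrence together with the rank conditions. -/
theorem favard_positiveDefinite (hN0 : N 0 = 0)
    (p : (n : ℕ) → Mon N n → MvPolynomial (GIdx N) ℝ)
    (hp0 : ∀ a : Mon N 0, p 0 a = 1) :
    (∃ ℒ : MvPolynomial (GIdx N) ℝ →ₗ[ℝ] ℝ, PositiveDefinite ℒ ∧
      (∀ n : ℕ,
        Submodule.span ℝ {q | ∃ k ≤ n, ∃ a : Mon N k, q = p k a} =
        Submodule.span ℝ
          {q | ∃ α : GIdx N →₀ ℕ, tdeg α ≤ n ∧ q = MvPolynomial.monomial α (1 : ℝ)}) ∧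
      (∀ (n : ℕ) (a b : Mon N n), ℒ (p n a * p n b) = if a = b then 1 else 0) ∧
      (∀ n k : ℕ, n ≠ k → ∀ (a : Mon N n) (b : Mon N k), ℒ (p n a * p k b) = 0)) ↔
    (∃ MM : (s : GIdx N) → (n' j : ℕ) → Matrix (Mon N n') (Mon N j) ℝ,
      (∀ s : GIdx N, RecurrenceON N p s (MM s) ∧ RankCondON N s (MM s)) ∧
      JointRankCondON N MM) := by
  open GradedFavard in
  constructor
  · rintro ⟨ℒ, -, hspan, hON⟩
    replace hON := isOrthonormal_sigma_iff.2 hON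
    exact ⟨fun s => recurrenceCoeff ℒ p s,
      fun s => ⟨recurrenceON_recurrenceCoeff hON hspan s,
        rankCondON_recurrenceCoeff hN0 hON hspan s⟩,
      jointRankCondON_recurrenceCoeff hON hspan⟩
  · rintro ⟨MM, hrec, hjoint⟩
    have hspan := pSpan_eq_degLE hN0 hp0 (fun s => (hrec s).1) hjoint
    let B := Module.Basis.mk (linearIndependent_of_pSpan_eq hspan) (top_le_span_of_pSpan_eq p hspan)
    have hON := isOrthonormal_coord B hN0 hp0 (fun s => (hrec s).1) hjoint (Module.Basis.coe_mk _ _)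
    exact ⟨_, hON.positiveDefinite (top_le_span_of_pSpan_eq p hspan), hspan,
      isOrthonormal_sigma_iff.1 hON⟩

end
end

section
/- Let J_{m,i} be the band-diagonal Jacobi operator on ℓ² built from the recurrence matrices of an orthonormal graded polynomial system. If Σ_{n=0}^∞ 1/𝔐_{n,m,i} = ∞ where 𝔐_{n,m,i} = Σ_{k=1}^m Σ_{r=n+1}^{n+k} ‖M^k_{m+r−k,m,i}‖₂, then J_{m,i} is a symmetric (and in fact self-adjoint) unbounded operator on its natural domain. -/
open scoped Classical RealInnerProductSpace

section
variable (N : ℕ → ℕ) [∀ k, Fintype (Mon N k)]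

/-- The ℓ²-operator (spectral) norm `‖·‖₂` of a real matrix. -/
noncomputable def specNorm {α β : Type*} [Fintype α] [Fintype β]
    (A : Matrix α β ℝ) : ℝ :=
  ‖LinearMap.toContinuousLinearMap (Matrix.toEuclideanLin A)‖

/-- `𝔐_{n,m,i} = Σ_{k=1}^m Σ_{r=n+1}^{n+k} ‖M^k_{m+r−k,m,i}‖₂`
(`M^k_{m+r-k,m,i}` is, in absolute-degree indexing, the block `M (r-k) r`). -/
noncomputable def frakM (m : ℕ) (M : (n' j : ℕ) → Matrix (Mon N n') (Mon N j) ℝ)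
    (n : ℕ) : ℝ :=
  ∑ k ∈ Finset.Icc 1 m, ∑ r ∈ Finset.Icc (n + 1) (n + k), specNorm (M (r - k) r)

/-- The Jacobi operator `J_{m,i}`, acting (pointwise) on sequences indexed by
`Σ n, Mon N n`. -/
noncomputable def Jfun (s : GIdx N) (M : (n' j : ℕ) → Matrix (Mon N n') (Mon N j) ℝ)
    (f : (Σ n, Mon N n) → ℝ) : (Σ n, Mon N n) → ℝ :=
  fun x =>
    (∑ j ∈ Finset.Icc x.1 (x.1 + s.1), ∑ b : Mon N j, M x.1 j x.2 b * f ⟨j, b⟩) +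
    ∑ k ∈ Finset.Icc 1 (min s.1 x.1), ∑ b : Mon N (x.1 - k),
      M (x.1 - k) x.1 b x.2 * f ⟨x.1 - k, b⟩

end

/-!
Write `J` through the symmetric kernel `symmKernel M`, whose upper blocks are the `M q r` and
whose lower blocks are their transposes (the diagonal blocks are symmetric by orthonormality).
The defect `⟨Jf, g⟩_n - ⟨f, Jg⟩_n` of the pairings truncated at degree `n` is then a sum of
block terms antisymmetric in the two block indices, so the square `[0, n]²` cancels and only
the blocks `M (r - k) r` with `r - k ≤ n < r` survive. Bounding each by its spectral norm and
the mass of `f` and `g` in the blocks of degree `n - m, …, n + m` gives `|defect_n| ≤ 𝔐_n t_n`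
with `t` summable. A nonzero limit of the defects would force `1/𝔐_n ≤ 2 t_n / |D|`
eventually, against `Σ 1/𝔐_n = ∞`. For self-adjointness, test the adjoint relation against
the unit vectors: they lie in the domain because `J` is banded, and yield `Jg = g'`
coordinatewise.
-/

open Finset Filter Topology Matrix

theorem abs_dotProduct_mulVec_le {α β : Type*} [Fintype α] [Fintype β] (A : Matrix α β ℝ)
    (u : β → ℝ) (v : α → ℝ) : |v ⬝ᵥ (A *ᵥ u)| ≤ specNorm A * ((u ⬝ᵥ u + v ⬝ᵥ v) / 2) := by
  have hu : ‖WithLp.toLp 2 u‖ ^ 2 = u ⬝ᵥ u := by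
    rw [← real_inner_self_eq_norm_sq, EuclideanSpace.inner_toLp_toLp, star_trivial]
  have hv : ‖WithLp.toLp 2 v‖ ^ 2 = v ⬝ᵥ v := by
    rw [← real_inner_self_eq_norm_sq, EuclideanSpace.inner_toLp_toLp, star_trivial]
  have hCS : |v ⬝ᵥ (A *ᵥ u)| ≤ ‖WithLp.toLp 2 (A *ᵥ u)‖ * ‖WithLp.toLp 2 v‖ := by
    simpa [EuclideanSpace.inner_toLp_toLp] using
      abs_real_inner_le_norm (WithLp.toLp 2 (A *ᵥ u)) (WithLp.toLp 2 v)
  have hop : ‖WithLp.toLp 2 (A *ᵥ u)‖ ≤ specNorm A * ‖WithLp.toLp 2 u‖ :=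
    (LinearMap.toContinuousLinearMap (Matrix.toEuclideanLin A)).le_opNorm (WithLp.toLp 2 u)
  have hAM := two_mul_le_add_sq ‖WithLp.toLp 2 u‖ ‖WithLp.toLp 2 v‖
  rw [hu, hv] at hAM
  calc |v ⬝ᵥ (A *ᵥ u)| ≤ specNorm A * ‖WithLp.toLp 2 u‖ * ‖WithLp.toLp 2 v‖ :=
        hCS.trans (mul_le_mul_of_nonneg_right hop (norm_nonneg _))
    _ ≤ specNorm A * ((u ⬝ᵥ u + v ⬝ᵥ v) / 2) := by
        rw [mul_assoc]
        exact mul_le_mul_of_nonneg_left (by linarith) (norm_nonneg _)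

section Blocks

variable {ι : ℕ → Type*}

noncomputable def symmKernel (M : (n j : ℕ) → Matrix (ι n) (ι j) ℝ) (x y : Σ n, ι n) : ℝ :=
  if x.1 ≤ y.1 then M x.1 y.1 x.2 y.2 else M y.1 x.1 y.2 x.2

variable {M : (n j : ℕ) → Matrix (ι n) (ι j) ℝ}

theorem symmKernel_comm (hdiag : ∀ n (a b : ι n), M n n a b = M n n b a)
    (x y : Σ n, ι n) : symmKernel M x y = symmKernel M y x := by
  obtain ⟨q, a⟩ := x
  obtain ⟨r, b⟩ := y
  rcases lt_trichotomy q r with h | rfl | h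
  · simp [symmKernel, h.le, h.not_ge]
  · simp [symmKernel, hdiag]
  · simp [symmKernel, h.le, h.not_ge]

theorem symmKernel_eq_zero {m : ℕ} (hband : ∀ n j, n + m < j → M n j = 0)
    {x y : Σ n, ι n} (h : x.1 + m < y.1 ∨ y.1 + m < x.1) : symmKernel M x y = 0 := by
  unfold symmKernel
  split_ifs
  · rw [hband _ _ (by omega), Matrix.zero_apply]
  · rw [hband _ _ (by omega), Matrix.zero_apply]

variable [∀ n, Fintype (ι n)]

noncomputable def blockInner (f g : (Σ n, ι n) → ℝ) (n : ℕ) : ℝ :=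
  ∑ a : ι n, f ⟨n, a⟩ * g ⟨n, a⟩

theorem hasSum_blockInner (f g : lp (fun _ : Σ n, ι n => ℝ) 2) :
    HasSum (blockInner f g) ⟪f, g⟫ := by
  have h : HasSum (fun x => f x * g x) ⟪f, g⟫ := by
    simpa [mul_comm] using lp.hasSum_inner (𝕜 := ℝ) f g
  exact h.sigma fun n => hasSum_fintype _

noncomputable def blockDefect (M : (n j : ℕ) → Matrix (ι n) (ι j) ℝ)
    (f g : (Σ n, ι n) → ℝ) (q r : ℕ) : ℝ :=
  ∑ a : ι q, ∑ b : ι r,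
    symmKernel M ⟨q, a⟩ ⟨r, b⟩ * (f ⟨r, b⟩ * g ⟨q, a⟩ - g ⟨r, b⟩ * f ⟨q, a⟩)

theorem blockDefect_swap (hdiag : ∀ n (a b : ι n), M n n a b = M n n b a)
    (f g : (Σ n, ι n) → ℝ) (q r : ℕ) :
    blockDefect M f g r q = -blockDefect M f g q r := by
  rw [blockDefect, blockDefect, Finset.sum_comm, ← sum_neg_distrib]
  refine sum_congr rfl fun a _ => ?_
  rw [← sum_neg_distrib]
  refine sum_congr rfl fun b _ => ?_
  rw [symmKernel_comm hdiag]
  ring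

theorem blockDefect_eq_zero {m : ℕ} (hband : ∀ n j, n + m < j → M n j = 0)
    (f g : (Σ n, ι n) → ℝ) {q r : ℕ} (h : q + m < r) : blockDefect M f g q r = 0 :=
  sum_eq_zero fun a _ => sum_eq_zero fun b _ => by
    rw [symmKernel_eq_zero hband (Or.inl h), zero_mul]

theorem blockDefect_eq_dotProduct (f g : (Σ n, ι n) → ℝ) {q r : ℕ} (h : q ≤ r) :
    blockDefect M f g q r =
      (fun a => g ⟨q, a⟩) ⬝ᵥ (M q r *ᵥ fun b => f ⟨r, b⟩) -
        (fun a => f ⟨q, a⟩) ⬝ᵥ (M q r *ᵥ fun b => g ⟨r, b⟩) := by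
  simp only [blockDefect, dotProduct, Matrix.mulVec, mul_sum, ← sum_sub_distrib]
  refine sum_congr rfl fun a _ => sum_congr rfl fun b _ => ?_
  rw [symmKernel, if_pos h]
  ring

theorem abs_blockDefect_le (f g : (Σ n, ι n) → ℝ) {q r : ℕ} (h : q ≤ r) :
    |blockDefect M f g q r| ≤ specNorm (M q r) *
      ((blockInner f f q + blockInner g g q + (blockInner f f r + blockInner g g r)) / 2) := by
  rw [blockDefect_eq_dotProduct f g h]
  calc _ ≤ _ + _ := abs_sub _ _
    _ ≤ _ := add_le_add (abs_dotProduct_mulVec_le (M q r) _ _)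
        (abs_dotProduct_mulVec_le (M q r) _ _)
    _ = _ := by simp only [blockInner, dotProduct]; ring

end Blocks

theorem sum_range_sum_range_add_eq_of_antisymm {T : ℕ → ℕ → ℝ} (hT : ∀ q r, T r q = -T q r)
    (n m : ℕ) :
    ∑ q ∈ range n, ∑ r ∈ range (n + m), T q r = ∑ q ∈ range n, ∑ r ∈ Ico n (n + m), T q r := by
  have hsquare : ∑ q ∈ range n, ∑ r ∈ range n, T q r = 0 := by
    have h : ∑ q ∈ range n, ∑ r ∈ range n, T q r = -∑ q ∈ range n, ∑ r ∈ range n, T q r := by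
      conv_lhs => rw [Finset.sum_comm]
      rw [← sum_neg_distrib]
      exact sum_congr rfl fun r _ => by
        rw [← sum_neg_distrib]
        exact sum_congr rfl fun q _ => hT r q
    linarith
  simp only [← sum_range_add_sum_Ico _ (Nat.le_add_right n m), sum_add_distrib, hsquare,
    zero_add]

/- For `n + 1 < m` the truncated subtraction `r - k` makes the right-hand side count some
terms twice, as `frakM` does. -/
theorem sum_range_sum_Ico_eq_sum_Icc_sum_Icc {T : ℕ → ℕ → ℝ} {m : ℕ}
    (hT : ∀ q r, q + m < r → T q r = 0) {n : ℕ} (hmn : m ≤ n + 1) :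
    ∑ q ∈ range (n + 1), ∑ r ∈ Ico (n + 1) (n + 1 + m), T q r =
      ∑ k ∈ Icc 1 m, ∑ r ∈ Icc (n + 1) (n + k), T (r - k) r := by
  rw [← sum_product', sum_sigma']
  symm
  refine sum_of_injOn (fun p => (p.2 - p.1, p.2)) ?_ ?_ ?_ fun _ _ => rfl
  · rintro ⟨k, r⟩ hkr ⟨k', r'⟩ hkr' h
    simp only [coe_sigma, Set.mem_sigma_iff, coe_Icc, Set.mem_Icc, Prod.mk.injEq] at hkr hkr' h
    simp only [Sigma.mk.injEq, heq_eq_eq]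
    constructor <;> omega
  · rintro ⟨k, r⟩ hkr
    simp only [coe_sigma, Set.mem_sigma_iff, coe_Icc, Set.mem_Icc] at hkr
    simp only [coe_product, coe_range, coe_Ico, Set.mem_prod, Set.mem_Iio, Set.mem_Ico]
    omega
  · rintro ⟨q, r⟩ hqr hnot
    simp only [mem_product, mem_range, mem_Ico] at hqr
    refine hT q r (not_le.1 fun hle => hnot ⟨⟨r - q, r⟩, ?_, ?_⟩)
    · simp only [coe_sigma, Set.mem_sigma_iff, coe_Icc, Set.mem_Icc]
      omega
    · simp only [Prod.mk.injEq, and_true]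
      omega

noncomputable def windowSum (c : ℕ → ℝ) (m n : ℕ) : ℝ :=
  ∑ k ∈ range (2 * m + 1), c (n - m + k)

theorem Summable.windowSum {c : ℕ → ℝ} (hc : Summable c) (m : ℕ) :
    Summable (windowSum c m) := by
  refine summable_sum fun k _ => (summable_nat_add_iff m).1 ?_
  simpa using (summable_nat_add_iff k).2 hc

theorem le_windowSum {c : ℕ → ℝ} (hc : ∀ u, 0 ≤ c u) {m n u : ℕ} (h₁ : n - m ≤ u)
    (h₂ : u ≤ n + m) : c u ≤ windowSum c m n := by
  have hk : u - (n - m) ∈ range (2 * m + 1) := mem_range.2 (by omega)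
  have h := single_le_sum (f := fun k => c (n - m + k)) (fun k _ => hc _) hk
  rwa [Nat.add_sub_cancel' h₁] at h

theorem summable_inv_of_le_mul {a t : ℕ → ℝ} (ha : ∀ n, 0 ≤ a n) (ht : Summable t) {ε : ℝ}
    (hε : 0 < ε) (h : ∀ᶠ n in atTop, ε ≤ a n * t n) : Summable fun n => (a n)⁻¹ := by
  refine (ht.div_const ε).of_norm_bounded_eventually_nat (h.mono fun n hn => ?_)
  have hpos : 0 < a n :=
    (ha n).lt_of_ne fun h0 => by rw [← h0, zero_mul] at hn; linarith
  rw [Real.norm_of_nonneg (inv_nonneg.2 (ha n)), inv_eq_one_div, div_le_div_iff₀ hpos hε]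
  linarith

section Jacobi

variable {N : ℕ → ℕ} [∀ k, Fintype (Mon N k)]

theorem RecurrenceON.apply_X_mul_diag {p : (n : ℕ) → Mon N n → MvPolynomial (GIdx N) ℝ}
    {ℒ : MvPolynomial (GIdx N) ℝ →ₗ[ℝ] ℝ}
    (horth : ∀ (n : ℕ) (a b : Mon N n), ℒ (p n a * p n b) = if a = b then 1 else 0)
    (horth' : ∀ n k : ℕ, n ≠ k → ∀ (a : Mon N n) (b : Mon N k), ℒ (p n a * p k b) = 0)
    {s : GIdx N} {M : (n' j : ℕ) → Matrix (Mon N n') (Mon N j) ℝ}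
    (hrec : RecurrenceON N p s M) (n : ℕ) (a b : Mon N n) :
    ℒ (p n b * (MvPolynomial.X s * p n a)) = M n n a b := by
  rw [hrec.2 n a]
  simp only [mul_add, mul_sum, mul_smul_comm, map_add, map_sum, map_smul, smul_eq_mul]
  rw [sum_eq_single_of_mem n (by simp) fun j _ hj => sum_eq_zero fun b' _ => by
      rw [horth' n j (Ne.symm hj), mul_zero],
    sum_eq_zero fun k hk => sum_eq_zero fun b' _ => by
      rw [horth' n (n - k) (by simp only [mem_Icc] at hk; omega), mul_zero]]
  simp [horth]

theorem RecurrenceON.diag_symm {p : (n : ℕ) → Mon N n → MvPolynomial (GIdx N) ℝ}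
    {ℒ : MvPolynomial (GIdx N) ℝ →ₗ[ℝ] ℝ}
    (horth : ∀ (n : ℕ) (a b : Mon N n), ℒ (p n a * p n b) = if a = b then 1 else 0)
    (horth' : ∀ n k : ℕ, n ≠ k → ∀ (a : Mon N n) (b : Mon N k), ℒ (p n a * p k b) = 0)
    {s : GIdx N} {M : (n' j : ℕ) → Matrix (Mon N n') (Mon N j) ℝ}
    (hrec : RecurrenceON N p s M) (n : ℕ) (a b : Mon N n) : M n n a b = M n n b a := by
  rw [← hrec.apply_X_mul_diag horth horth', ← hrec.apply_X_mul_diag horth horth']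
  congr 1
  ring

variable {s : GIdx N} {M : (n' j : ℕ) → Matrix (Mon N n') (Mon N j) ℝ}

theorem Jfun_eq_sum_range (hband : ∀ n j, n + s.1 < j → M n j = 0) (f : (Σ n, Mon N n) → ℝ)
    (x : Σ n, Mon N n) {L : ℕ} (hL : x.1 + s.1 < L) :
    Jfun N s M f x = ∑ j ∈ range L, ∑ b : Mon N j, symmKernel M x ⟨j, b⟩ * f ⟨j, b⟩ := by
  obtain ⟨q, a⟩ := x
  simp only at hL
  rw [Jfun, ← sum_range_add_sum_Ico _ (show q ≤ L by omega), add_comm]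
  congr 1
  · refine sum_of_injOn (fun k => q - k) ?_ ?_ ?_ ?_
    · intro k hk k' hk' h
      simp only [coe_Icc, Set.mem_Icc] at hk hk' h
      omega
    · intro k hk
      simp only [coe_Icc, Set.mem_Icc, coe_range, Set.mem_Iio] at hk ⊢
      omega
    · intro j hj hnot
      simp only [mem_range] at hj
      have hjq : j + s.1 < q := not_le.1 fun hle => hnot ⟨q - j, by
        simp only [coe_Icc, Set.mem_Icc]; omega, by simp only; omega⟩
      exact sum_eq_zero fun b _ => by rw [symmKernel_eq_zero hband (Or.inr hjq), zero_mul]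
    · intro k hk
      simp only [mem_Icc] at hk
      exact sum_congr rfl fun b _ => by rw [symmKernel, if_neg (by simp only; omega)]
  · calc _ = ∑ j ∈ Icc q (q + s.1), ∑ b : Mon N j, symmKernel M ⟨q, a⟩ ⟨j, b⟩ * f ⟨j, b⟩ :=
          sum_congr rfl fun j hj => sum_congr rfl fun b _ => by
            rw [symmKernel, if_pos (mem_Icc.1 hj).1]
      _ = _ := sum_subset (fun j hj => by simp only [mem_Icc, mem_Ico] at hj ⊢; omega)
          fun j hj hj' => sum_eq_zero fun b _ => by
            simp only [mem_Icc, mem_Ico] at hj hj'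
            rw [symmKernel_eq_zero hband (Or.inl (by simp only; omega)), zero_mul]

theorem blockInner_Jfun_sub (hband : ∀ n j, n + s.1 < j → M n j = 0)
    (f g : (Σ n, Mon N n) → ℝ) {q L : ℕ} (hL : q + s.1 < L) :
    blockInner (Jfun N s M f) g q - blockInner f (Jfun N s M g) q =
      ∑ r ∈ range L, blockDefect M f g q r := by
  have hJ : ∀ (h : (Σ n, Mon N n) → ℝ) (a : Mon N q), Jfun N s M h ⟨q, a⟩ =
      ∑ r ∈ range L, ∑ b : Mon N r, symmKernel M ⟨q, a⟩ ⟨r, b⟩ * h ⟨r, b⟩ :=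
    fun h a => Jfun_eq_sum_range hband h ⟨q, a⟩ hL
  simp only [blockInner, blockDefect, hJ, sum_mul, mul_sum, ← sum_sub_distrib]
  rw [Finset.sum_comm]
  exact sum_congr rfl fun r _ => sum_congr rfl fun a _ => sum_congr rfl fun b _ => by ring

theorem truncated_defect_eq (hdiag : ∀ n (a b : Mon N n), M n n a b = M n n b a)
    (hband : ∀ n j, n + s.1 < j → M n j = 0) (f g : (Σ n, Mon N n) → ℝ) {n : ℕ}
    (hn : s.1 ≤ n + 1) :
    ∑ q ∈ range (n + 1), blockInner (Jfun N s M f) g q -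
        ∑ q ∈ range (n + 1), blockInner f (Jfun N s M g) q =
      ∑ k ∈ Icc 1 s.1, ∑ r ∈ Icc (n + 1) (n + k), blockDefect M f g (r - k) r := by
  rw [← sum_sub_distrib, sum_congr rfl fun q hq =>
      blockInner_Jfun_sub hband f g (L := n + 1 + s.1) (by simp only [mem_range] at hq; omega),
    sum_range_sum_range_add_eq_of_antisymm (blockDefect_swap hdiag f g),
    sum_range_sum_Ico_eq_sum_Icc_sum_Icc (fun q r h => blockDefect_eq_zero hband f g h) hn]

theorem abs_truncated_defect_le (hdiag : ∀ n (a b : Mon N n), M n n a b = M n n b a)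
    (hband : ∀ n j, n + s.1 < j → M n j = 0) (f g : (Σ n, Mon N n) → ℝ) {n : ℕ}
    (hn : s.1 ≤ n + 1) :
    |∑ q ∈ range (n + 1), blockInner (Jfun N s M f) g q -
        ∑ q ∈ range (n + 1), blockInner f (Jfun N s M g) q| ≤
      frakM N s.1 M n * windowSum (fun u => blockInner f f u + blockInner g g u) s.1 n := by
  have hc : ∀ u, 0 ≤ blockInner f f u + blockInner g g u := fun u =>
    add_nonneg (sum_nonneg fun _ _ => mul_self_nonneg _) (sum_nonneg fun _ _ => mul_self_nonneg _)
  rw [truncated_defect_eq hdiag hband f g hn, frakM, sum_mul]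
  refine (abs_sum_le_sum_abs _ _).trans (sum_le_sum fun k hk => ?_)
  rw [sum_mul]
  refine (abs_sum_le_sum_abs _ _).trans (sum_le_sum fun r hr => ?_)
  simp only [mem_Icc] at hk hr
  have hq := le_windowSum hc (m := s.1) (n := n) (u := r - k) (by omega) (by omega)
  have hr := le_windowSum hc (m := s.1) (n := n) (u := r) (by omega) (by omega)
  exact (abs_blockDefect_le f g (Nat.sub_le r k)).trans
    (mul_le_mul_of_nonneg_left (by linarith) (norm_nonneg _))

theorem frakM_nonneg (m : ℕ) (M : (n' j : ℕ) → Matrix (Mon N n') (Mon N j) ℝ) (n : ℕ) :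
    0 ≤ frakM N m M n :=
  sum_nonneg fun _ _ => sum_nonneg fun _ _ => norm_nonneg _

theorem inner_Jfun_comm (hdiag : ∀ n (a b : Mon N n), M n n a b = M n n b a)
    (hband : ∀ n j, n + s.1 < j → M n j = 0)
    (hCarleman : ¬ Summable fun n : ℕ => (frakM N s.1 M n)⁻¹)
    (f g : lp (fun _ : Σ n, Mon N n => ℝ) 2)
    (hf : Jfun N s M ⇑f ∈ lp (fun _ : Σ n, Mon N n => ℝ) 2)
    (hg : Jfun N s M ⇑g ∈ lp (fun _ : Σ n, Mon N n => ℝ) 2) :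
    ⟪(⟨Jfun N s M ⇑f, hf⟩ : lp (fun _ : Σ n, Mon N n => ℝ) 2), g⟫ =
      ⟪f, (⟨Jfun N s M ⇑g, hg⟩ : lp (fun _ : Σ n, Mon N n => ℝ) 2)⟫ := by
  by_contra hne
  have hD := abs_pos.2 (sub_ne_zero.2 hne)
  have hlim := ((hasSum_blockInner (⟨Jfun N s M ⇑f, hf⟩ : lp (fun _ : Σ n, Mon N n => ℝ) 2)
    g).tendsto_sum_nat.sub (hasSum_blockInner f (⟨Jfun N s M ⇑g, hg⟩ :
      lp (fun _ : Σ n, Mon N n => ℝ) 2)).tendsto_sum_nat).comp (tendsto_add_atTop_nat 1)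
  have htail := ((hasSum_blockInner f f).summable.add
    (hasSum_blockInner g g).summable).windowSum s.1
  refine hCarleman (summable_inv_of_le_mul (frakM_nonneg s.1 M) htail (half_pos hD) ?_)
  filter_upwards [hlim.abs.eventually (eventually_ge_nhds (half_lt_self hD)),
    eventually_ge_atTop s.1] with n hn hsn
  exact hn.trans (abs_truncated_defect_le hdiag hband f g (by omega))

theorem Jfun_single (hband : ∀ n j, n + s.1 < j → M n j = 0) (x y : Σ n, Mon N n) :
    Jfun N s M ⇑(lp.single 2 x (1 : ℝ)) y = symmKernel M y x := by
  rw [Jfun_eq_sum_range hband _ y (L := y.1 + s.1 + x.1 + 1) (by omega), sum_sigma',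
    sum_eq_single_of_mem x (by simp only [mem_sigma, mem_range, mem_univ, and_true]; omega)
      fun z _ hz => by rw [lp.single_apply_ne 2 x _ hz, mul_zero],
    lp.single_apply_self, mul_one]

theorem memℓp_Jfun_single (hband : ∀ n j, n + s.1 < j → M n j = 0) (x : Σ n, Mon N n) :
    Memℓp (Jfun N s M ⇑(lp.single 2 x (1 : ℝ))) 2 := by
  refine (memℓp_zero ?_).of_exponent_ge zero_le
  refine ((range (x.1 + s.1 + 1)).sigma fun _ => univ).finite_toSet.subset fun y hy => ?_
  by_contra hout
  simp only [coe_sigma, coe_range, coe_univ, Set.mem_sigma_iff, Set.mem_Iio, Set.mem_univ,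
    and_true, not_lt] at hout
  exact hy (by rw [Jfun_single hband, symmKernel_eq_zero hband (Or.inr (by omega))])

theorem Jfun_eq_of_inner_eq (hdiag : ∀ n (a b : Mon N n), M n n a b = M n n b a)
    (hband : ∀ n j, n + s.1 < j → M n j = 0) {g g' : lp (fun _ : Σ n, Mon N n => ℝ) 2}
    (hadj : ∀ (f : lp (fun _ : Σ n, Mon N n => ℝ) 2)
      (hf : Jfun N s M ⇑f ∈ lp (fun _ : Σ n, Mon N n => ℝ) 2),
      ⟪(⟨Jfun N s M ⇑f, hf⟩ : lp (fun _ : Σ n, Mon N n => ℝ) 2), g⟫ = ⟪f, g'⟫) :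
    Jfun N s M ⇑g = ⇑g' := by
  funext x
  have h := hadj (lp.single 2 x 1) (memℓp_Jfun_single hband x)
  rw [lp.inner_single_left, lp.inner_eq_tsum] at h
  simp only [RCLike.inner_apply, Real.ringHom_apply, mul_one] at h
  rw [Jfun_eq_sum_range hband g x (L := x.1 + s.1 + 1) (by omega), sum_sigma', ← h,
    tsum_eq_sum fun y hy => ?_]
  · exact sum_congr rfl fun y _ => by rw [Jfun_single hband, symmKernel_comm hdiag, mul_comm]
  · simp only [mem_sigma, mem_range, mem_univ, and_true, not_lt] at hy
    rw [Jfun_single hband, symmKernel_eq_zero hband (Or.inr (by omega)), mul_zero]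

end Jacobi

section
variable (N : ℕ → ℕ) [∀ k, Fintype (Mon N k)]

theorem jacobi_selfAdjoint
    (p : (n : ℕ) → Mon N n → MvPolynomial (GIdx N) ℝ)
    (ℒ : MvPolynomial (GIdx N) ℝ →ₗ[ℝ] ℝ)
    -- `{p_n}` is orthonormal with respect to `ℒ`
    (horth : ∀ (n : ℕ) (a b : Mon N n), ℒ (p n a * p n b) = if a = b then 1 else 0)
    (horth' : ∀ n k : ℕ, n ≠ k → ∀ (a : Mon N n) (b : Mon N k), ℒ (p n a * p k b) = 0)
    (s : GIdx N) (M : (n' j : ℕ) → Matrix (Mon N n') (Mon N j) ℝ)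
    (hrec : RecurrenceON N p s M)
    (hCarleman : ¬ Summable fun n : ℕ => (frakM N s.1 M n)⁻¹) :
    -- `J` is symmetric on its natural domain ...
    (∀ (f g : lp (fun _ : Σ n, Mon N n => ℝ) 2)
      (hf : Jfun N s M ⇑f ∈ lp (fun _ : Σ n, Mon N n => ℝ) 2)
      (hg : Jfun N s M ⇑g ∈ lp (fun _ : Σ n, Mon N n => ℝ) 2),
      ⟪(⟨Jfun N s M ⇑f, hf⟩ : lp (fun _ : Σ n, Mon N n => ℝ) 2), g⟫ =
      ⟪f, (⟨Jfun N s M ⇑g, hg⟩ : lp (fun _ : Σ n, Mon N n => ℝ) 2)⟫) ∧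
    -- ... and in fact self-adjoint: the adjoint does not extend it
    (∀ g g' : lp (fun _ : Σ n, Mon N n => ℝ) 2,
      (∀ (f : lp (fun _ : Σ n, Mon N n => ℝ) 2)
        (hf : Jfun N s M ⇑f ∈ lp (fun _ : Σ n, Mon N n => ℝ) 2),
        ⟪(⟨Jfun N s M ⇑f, hf⟩ : lp (fun _ : Σ n, Mon N n => ℝ) 2), g⟫ = ⟪f, g'⟫) →
      ∃ hg : Jfun N s M ⇑g ∈ lp (fun _ : Σ n, Mon N n => ℝ) 2,
        (⟨Jfun N s M ⇑g, hg⟩ : lp (fun _ : Σ n, Mon N n => ℝ) 2) = g') := by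
  have hdiag := hrec.diag_symm horth horth'
  have hband : ∀ n j, n + s.1 < j → M n j = 0 := fun n j h => hrec.1 n j (Or.inr h)
  refine ⟨inner_Jfun_comm hdiag hband hCarleman, fun g g' hadj => ?_⟩
  have hJ := Jfun_eq_of_inner_eq hdiag hband hadj
  exact ⟨hJ ▸ g'.2, lp.ext hJ⟩

end
end

section
/- For words in the two-letter alphabet {0, 1} that do not end in 0, the inner product induced by the expected Itô signature E Ŝ = Σ_n (T^n/n!) 0^n via the quasi-shuffle product satisfies: (0^{i_1} 1 0^{i_2} ⋯ 0^{i_k} 1, 0^{j_1} 1 0^{j_2} ⋯ 0^{j_k} 1) = (T^{i+j+k}/(i+j+k)!) · ∏_{r=1}^k C(i_r + j_r, i_r), where i = Σ i_l, j = Σ j_l, and words with different numbers of 1's are orthogonal. -/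
/- **Statement 14.**  Combinatorics of the Itô inner product for words over the
two-letter alphabet `{0, 1}` (`0` the time letter): the quasi-shuffle product together
with the expected Itô signature `E Ŝ = Σ_n (T^n/n!)·0^n` induce the inner product
`(u, v) = ⟨u ⧢̂ v, E Ŝ⟩`, computed explicitly on words not ending in `0`. -/

/-- The quasi-shuffle product on words over `{0,1}`, with bracket
`[α,β] = δ_{αβ}·𝟙_{α≠0}·0`. -/
noncomputable def qsh : List (Fin 2) → List (Fin 2) → (List (Fin 2) →₀ ℝ)
  | [], v => Finsupp.single v 1
  | u, [] => Finsupp.single u 1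
  | a :: u, b :: v =>
      Finsupp.mapDomain (a :: ·) (qsh u (b :: v)) +
      Finsupp.mapDomain (b :: ·) (qsh (a :: u) v) +
      (if a = b ∧ a ≠ 0 then Finsupp.mapDomain ((0 : Fin 2) :: ·) (qsh u v) else 0)
termination_by u v => u.length + v.length

/-- The inner product `(u,v) = ⟨u ⧢̂ v, E Ŝ⟩`, where `⟨0^n, E Ŝ⟩ = T^n/n!` and all other
words evaluate to `0`. -/
noncomputable def itoIP (T : ℝ) (u v : List (Fin 2)) : ℝ :=
  (qsh u v).sum fun w c =>
    c * (if ∀ a ∈ w, a = 0 then T ^ w.length / w.length.factorial else 0)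

/-- The word `0^{i₁} 1 0^{i₂} 1 ⋯ 0^{i_k} 1`. -/
def wordOf {k : ℕ} (i : Fin k → ℕ) : List (Fin 2) :=
  (List.ofFn fun r => List.replicate (i r) (0 : Fin 2) ++ [1]).flatten

lemma qsh_cons_cons (a b : Fin 2) (u v : List (Fin 2)) :
    qsh (a :: u) (b :: v) =
      Finsupp.mapDomain (a :: ·) (qsh u (b :: v)) +
      Finsupp.mapDomain (b :: ·) (qsh (a :: u) v) +
      (if a = b ∧ a ≠ 0 then Finsupp.mapDomain ((0 : Fin 2) :: ·) (qsh u v) else 0) := by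
  rw [qsh]

lemma qsh_nil_left (v : List (Fin 2)) : qsh [] v = Finsupp.single v 1 := by rw [qsh]

lemma qsh_nil_right (u : List (Fin 2)) : qsh u [] = Finsupp.single u 1 := by
  cases u <;> (rw [qsh]; try simp)

noncomputable def phiF (T : ℝ) (m : ℕ) (f : List (Fin 2) →₀ ℝ) : ℝ :=
  f.sum fun w c =>
    c * (if ∀ a ∈ w, a = 0 then T ^ (w.length + m) / (w.length + m).factorial else 0)

lemma phiF_add (T : ℝ) (m : ℕ) (f g : List (Fin 2) →₀ ℝ) :
    phiF T m (f + g) = phiF T m f + phiF T m g := by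
  unfold phiF
  rw [Finsupp.sum_add_index'] <;> intros <;> [rw [zero_mul]; rw [add_mul]]

lemma phiF_zero (T : ℝ) (m : ℕ) : phiF T m 0 = 0 := by
  simp [phiF]

lemma phiF_single (T : ℝ) (m : ℕ) (w : List (Fin 2)) (c : ℝ) :
    phiF T m (Finsupp.single w c) =
      c * (if ∀ a ∈ w, a = 0 then T ^ (w.length + m) / (w.length + m).factorial else 0) :=
  Finsupp.sum_single_index (zero_mul _)

lemma phiF_map0 (T : ℝ) (m : ℕ) (f : List (Fin 2) →₀ ℝ) :
    phiF T m (Finsupp.mapDomain ((0 : Fin 2) :: ·) f) = phiF T (m + 1) f := by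
  unfold phiF
  rw [Finsupp.sum_mapDomain_index (by intro b; rw [zero_mul])
    (by intro b c d; rw [add_mul])]
  refine Finsupp.sum_congr fun w _ => ?_
  simp only [List.forall_mem_cons, List.length_cons, true_and, Fin.isValue,
    show w.length + 1 + m = w.length + (m + 1) by omega]

lemma phiF_map1 (T : ℝ) (m : ℕ) (f : List (Fin 2) →₀ ℝ) :
    phiF T m (Finsupp.mapDomain ((1 : Fin 2) :: ·) f) = 0 := by
  unfold phiF
  rw [Finsupp.sum_mapDomain_index (by intro b; rw [zero_mul])
    (by intro b c d; rw [add_mul])]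
  refine Finset.sum_eq_zero fun w _ => ?_
  simp [List.forall_mem_cons]

noncomputable def F (T : ℝ) (m : ℕ) (u v : List (Fin 2)) : ℝ := phiF T m (qsh u v)

lemma F_00 (T : ℝ) (m : ℕ) (u v : List (Fin 2)) :
    F T m (0 :: u) (0 :: v) = F T (m + 1) u (0 :: v) + F T (m + 1) (0 :: u) v := by
  unfold F
  rw [qsh_cons_cons]
  simp [phiF_add, phiF_map0, phiF_zero]

lemma F_01 (T : ℝ) (m : ℕ) (u v : List (Fin 2)) :
    F T m (0 :: u) (1 :: v) = F T (m + 1) u (1 :: v) := by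
  unfold F
  rw [qsh_cons_cons]
  have : ¬((0 : Fin 2) = 1 ∧ (0 : Fin 2) ≠ 0) := by simp
  simp [this, phiF_add, phiF_map0, phiF_map1, phiF_zero]

lemma F_10 (T : ℝ) (m : ℕ) (u v : List (Fin 2)) :
    F T m (1 :: u) (0 :: v) = F T (m + 1) (1 :: u) v := by
  unfold F
  rw [qsh_cons_cons]
  have : ¬((1 : Fin 2) = 0 ∧ (1 : Fin 2) ≠ 0) := by simp
  simp [this, phiF_add, phiF_map0, phiF_map1, phiF_zero]

lemma F_11 (T : ℝ) (m : ℕ) (u v : List (Fin 2)) :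
    F T m (1 :: u) (1 :: v) = F T (m + 1) u v := by
  unfold F
  rw [qsh_cons_cons]
  have : ((1 : Fin 2) = 1 ∧ (1 : Fin 2) ≠ 0) := by simp
  simp [this, phiF_add, phiF_map0, phiF_map1, phiF_zero]

lemma F_nil_left (T : ℝ) (m : ℕ) (v : List (Fin 2)) :
    F T m [] v =
      (if ∀ a ∈ v, a = 0 then T ^ (v.length + m) / (v.length + m).factorial else 0) := by
  rw [F, qsh_nil_left, phiF_single, one_mul]

lemma F_nil_right (T : ℝ) (m : ℕ) (u : List (Fin 2)) :
    F T m u [] =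
      (if ∀ a ∈ u, a = 0 then T ^ (u.length + m) / (u.length + m).factorial else 0) := by
  rw [F, qsh_nil_right, phiF_single, one_mul]

lemma F_block (T : ℝ) : ∀ i j m (u v : List (Fin 2)),
    F T m (List.replicate i 0 ++ 1 :: u) (List.replicate j 0 ++ 1 :: v) =
      ((i + j).choose i : ℝ) * F T (m + (i + j + 1)) u v := by
  intro i
  induction i with
  | zero =>
    intro j
    induction j with
    | zero => intro m u v; simp [F_11]
    | succ s ihs =>
      intro m u v
      have h := ihs (m + 1) u v
      simp only [List.replicate_succ, List.replicate_zero, List.cons_append, List.nil_append] at h ⊢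
      rw [F_10, h]
      have e : m + 1 + (0 + s + 1) = m + (0 + (s + 1) + 1) := by omega
      rw [e]
      norm_num
  | succ t iht =>
    intro j
    induction j with
    | zero =>
      intro m u v
      have h := iht 0 (m + 1) u v
      simp only [List.replicate_succ, List.replicate_zero, List.cons_append, List.nil_append] at h ⊢
      rw [F_01, h]
      have e : m + 1 + (t + 0 + 1) = m + (t + 1 + 0 + 1) := by omega
      rw [e]
      norm_num
    | succ s ihs =>
      intro m u v
      have h1 := iht (s + 1) (m + 1) u v
      have h2 := ihs (m + 1) u v
      simp only [List.replicate_succ, List.cons_append] at h1 h2 ⊢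
      rw [F_00, h1, h2]
      have e1 : m + 1 + (t + (s + 1) + 1) = m + (t + 1 + (s + 1) + 1) := by omega
      have e2 : m + 1 + (t + 1 + s + 1) = m + (t + 1 + (s + 1) + 1) := by omega
      rw [e1, e2, ← add_mul]
      congr 1
      norm_cast
      rw [show t + 1 + (s + 1) = (t + s + 1) + 1 from by omega, Nat.choose_succ_succ]
      simp [show t + (s + 1) = t + s + 1 from by omega, show t + 1 + s = t + s + 1 from by omega]

lemma wordOf_zero (i : Fin 0 → ℕ) : wordOf i = [] := by simp [wordOf]

lemma wordOf_succ {k : ℕ} (i : Fin (k + 1) → ℕ) :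
    wordOf i = List.replicate (i 0) 0 ++ 1 :: wordOf (fun r => i r.succ) := by
  unfold wordOf
  rw [List.ofFn_succ, List.flatten_cons]
  simp [List.append_assoc]

lemma one_mem_wordOf {k : ℕ} (i : Fin (k + 1) → ℕ) : (1 : Fin 2) ∈ wordOf i := by
  rw [wordOf_succ]; simp

lemma F_word (T : ℝ) : ∀ k (i j : Fin k → ℕ) m,
    F T m (wordOf i) (wordOf j) =
      (∏ r, ((i r + j r).choose (i r) : ℝ)) *
        (T ^ (∑ r, i r + ∑ r, j r + k + m) / ((∑ r, i r + ∑ r, j r + k + m).factorial)) := by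
  intro k
  induction k with
  | zero =>
    intro i j m
    rw [wordOf_zero, wordOf_zero, F_nil_left]
    simp
  | succ k ih =>
    intro i j m
    rw [wordOf_succ i, wordOf_succ j, F_block, ih]
    rw [Fin.prod_univ_succ, Fin.sum_univ_succ (f := i), Fin.sum_univ_succ (f := j)]
    have e : ∑ r : Fin k, i r.succ + ∑ r : Fin k, j r.succ + k + (m + (i 0 + j 0 + 1)) =
        i 0 + ∑ r : Fin k, i r.succ + (j 0 + ∑ r : Fin k, j r.succ) + (k + 1) + m := by omega
    rw [e]
    ring

lemma F_word_ne (T : ℝ) : ∀ k k' (i : Fin k → ℕ) (j : Fin k' → ℕ) m, k ≠ k' →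
    F T m (wordOf i) (wordOf j) = 0 := by
  intro k
  induction k with
  | zero =>
    intro k' i j m hne
    cases k' with
    | zero => exact absurd rfl hne
    | succ s =>
      rw [wordOf_zero, F_nil_left, if_neg]
      intro h
      exact absurd (h 1 (one_mem_wordOf j)) (by decide)
  | succ t iht =>
    intro k' i j m hne
    cases k' with
    | zero =>
      rw [wordOf_zero, F_nil_right, if_neg]
      intro h
      exact absurd (h 1 (one_mem_wordOf i)) (by decide)
    | succ s =>
      rw [wordOf_succ i, wordOf_succ j, F_block, iht s _ _ _ (by omega), mul_zero]

lemma itoIP_eq_F (T : ℝ) (u v : List (Fin 2)) : itoIP T u v = F T 0 u v := by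
  unfold itoIP F phiF
  refine Finsupp.sum_congr fun w _ => ?_
  simp


/-- Words with different numbers of `1`'s are orthogonal, and
`(0^{i₁}1⋯0^{i_k}1, 0^{j₁}1⋯0^{j_k}1) = (T^{i+j+k}/(i+j+k)!)·∏_r C(i_r+j_r, i_r)`. -/
theorem itoIP_formula (T : ℝ) :
    (∀ (k k' : ℕ) (i : Fin k → ℕ) (j : Fin k' → ℕ), k ≠ k' →
      itoIP T (wordOf i) (wordOf j) = 0) ∧
    (∀ (k : ℕ) (i j : Fin k → ℕ),
      itoIP T (wordOf i) (wordOf j) =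
        T ^ (∑ r, i r + ∑ r, j r + k) / ((∑ r, i r + ∑ r, j r + k).factorial) *
          ∏ r, ((i r + j r).choose (i r) : ℝ)) := by
  constructor
  · intro k k' i j h
    rw [itoIP_eq_F, F_word_ne T k k' i j 0 h]
  · intro k i j
    rw [itoIP_eq_F, F_word]
    simp only [Nat.add_zero]
    ring
end

section
/- For a, b > 0 and natural numbers i, j, the product of simplices decomposes as a disjoint union: Δ^i[0,a] × Δ^j[0,b] (with a ≤ b) is, up to Lebesgue-null sets, the disjoint union over k = 0,…,j and shuffles σ ∈ Sh(i,k) of the sets {0 < u_{σ(1)} < ⋯ < u_{σ(i+k)} < a < u_{σ(i+k+1)} < ⋯ < u_{σ(i+j)} < b}. In particular, the monomial multiple Wiener integral ∫_{[0,T]^n} t_1^{m_1}⋯t_n^{m_n} dW_{t_1}^{α_1}⋯dW_{t_n}^{α_n} is a finite linear combination of coordinates of the Itô signature of time-augmented Brownian motion. -/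
open MeasureTheory

/- **Statement 17.**  Decomposition of a product of open simplices into shuffle cells,
up to Lebesgue-null sets.  An `(i,k)`-shuffle is encoded by the set `P ⊆ Fin (i+k)` of
positions (of cardinality `i`) occupied by the first block. -/

/-- The open simplex `Δ^i[0,a] = {0 < u₁ < ⋯ < u_i < a}`. -/
def simplex (i : ℕ) (a : ℝ) : Set (Fin i → ℝ) :=
  {u | StrictMono u ∧ ∀ l, u l ∈ Set.Ioo 0 a}

/-- The sequence `u_{σ(1)}, …, u_{σ(i+k)}` obtained by interleaving the first block
`p.1` (placed at the positions in `P`, in order) with the first `k` coordinates of the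
second block `p.2` (placed at the remaining positions, in order). -/
noncomputable def interleave (i j k : ℕ) (hk : k ≤ j) (P : Finset (Fin (i + k)))
    (hP : P.card = i) (p : (Fin i → ℝ) × (Fin j → ℝ)) (l : Fin (i + k)) : ℝ :=
  if h : l ∈ P then p.1 ((P.orderIsoOfFin hP).symm ⟨l, h⟩)
  else p.2 (Fin.castLE hk
    ((Pᶜ.orderIsoOfFin (by rw [Finset.card_compl, hP, Fintype.card_fin]; omega)).symm
      ⟨l, by simpa [Finset.mem_compl] using h⟩))

/-- The shuffle cell
`{0 < u_{σ(1)} < ⋯ < u_{σ(i+k)} < a < u_{σ(i+k+1)} < ⋯ < u_{σ(i+j)} < b}`. -/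
noncomputable def shuffleCell (i j k : ℕ) (hk : k ≤ j) (a b : ℝ)
    (P : Finset (Fin (i + k))) (hP : P.card = i) :
    Set ((Fin i → ℝ) × (Fin j → ℝ)) :=
  {p | StrictMono (interleave i j k hk P hP p) ∧
       (∀ l, interleave i j k hk P hP p l ∈ Set.Ioo 0 a) ∧
       (∀ l : Fin j, k ≤ (l : ℕ) → p.2 l ∈ Set.Ioo a b) ∧
       (∀ l l' : Fin j, k ≤ (l : ℕ) → l < l' → p.2 l < p.2 l')}

section Helpers

variable {i j k : ℕ} (hk : k ≤ j) (P : Finset (Fin (i + k))) (hP : P.card = i)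
  (p : (Fin i → ℝ) × (Fin j → ℝ))

lemma card_compl' (hP : P.card = i) : Pᶜ.card = k := by
  rw [Finset.card_compl, hP, Fintype.card_fin]; omega

lemma interleave_fst (m : Fin i) :
    interleave i j k hk P hP p (P.orderEmbOfFin hP m) = p.1 m := by
  have hmem : P.orderEmbOfFin hP m ∈ P := P.orderEmbOfFin_mem hP m
  have harg : (P.orderIsoOfFin hP).symm ⟨P.orderEmbOfFin hP m, hmem⟩ = m := by
    rw [show (⟨P.orderEmbOfFin hP m, hmem⟩ : {x // x ∈ P}) = P.orderIsoOfFin hP m from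
      Subtype.ext (P.coe_orderIsoOfFin_apply hP m).symm, OrderIso.symm_apply_apply]
  rw [interleave, dif_pos hmem]
  exact congrArg p.1 harg

lemma interleave_snd (l : Fin k) :
    interleave i j k hk P hP p (Pᶜ.orderEmbOfFin (card_compl' P hP) l)
      = p.2 (Fin.castLE hk l) := by
  have hmem : Pᶜ.orderEmbOfFin (card_compl' P hP) l ∈ Pᶜ :=
    Pᶜ.orderEmbOfFin_mem (card_compl' P hP) l
  have hnot : Pᶜ.orderEmbOfFin (card_compl' P hP) l ∉ P := Finset.mem_compl.mp hmem
  have harg : (Pᶜ.orderIsoOfFin (card_compl' P hP)).symm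
      ⟨Pᶜ.orderEmbOfFin (card_compl' P hP) l, hmem⟩ = l := by
    rw [show (⟨Pᶜ.orderEmbOfFin (card_compl' P hP) l, hmem⟩ : {x // x ∈ Pᶜ}) =
        Pᶜ.orderIsoOfFin (card_compl' P hP) l from
      Subtype.ext (Pᶜ.coe_orderIsoOfFin_apply (card_compl' P hP) l).symm,
      OrderIso.symm_apply_apply]
  rw [interleave, dif_neg hnot]
  exact congrArg (fun t => p.2 (Fin.castLE hk t)) harg

lemma interleave_notMem_exists {m : Fin (i + k)} (hm : m ∉ P) :
    ∃ l : Fin k, interleave i j k hk P hP p m = p.2 (Fin.castLE hk l) := by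
  rw [interleave, dif_neg hm]
  exact ⟨_, rfl⟩

lemma interleave_mem_exists {m : Fin (i + k)} (hm : m ∈ P) :
    ∃ x : Fin i, interleave i j k hk P hP p m = p.1 x := by
  rw [interleave, dif_pos hm]
  exact ⟨_, rfl⟩

variable {a b : ℝ}

lemma cell_snd_mem (hp : p ∈ shuffleCell i j k hk a b P hP) (l : Fin j)
    (hl : (l : ℕ) < k) : p.2 l ∈ Set.Ioo 0 a := by
  have h : interleave i j k hk P hP p (Pᶜ.orderEmbOfFin (card_compl' P hP) ⟨(l : ℕ), hl⟩)
      = p.2 l := by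
    rw [interleave_snd hk P hP p ⟨(l : ℕ), hl⟩]
    exact congrArg p.2 (Fin.ext rfl)
  rw [← h]
  exact hp.2.1 _

lemma cell_subset (ha : 0 < a) (hab : a ≤ b) :
    shuffleCell i j k hk a b P hP ⊆ simplex i a ×ˢ simplex j b := by
  intro p hp
  obtain ⟨hmono, hIoo, hupper, humono⟩ := hp
  refine ⟨⟨?_, ?_⟩, ?_, ?_⟩
  · intro m m' hmm
    have h := hmono ((P.orderEmbOfFin hP).strictMono hmm)
    rwa [interleave_fst, interleave_fst] at h
  · intro m
    have h := hIoo (P.orderEmbOfFin hP m)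
    rwa [interleave_fst] at h
  · intro l l' hll
    by_cases h1 : (l' : ℕ) < k
    · have h0 : (l : ℕ) < k := lt_trans (by exact_mod_cast hll) h1
      have h := hmono ((Pᶜ.orderEmbOfFin (card_compl' P hP)).strictMono
        (show (⟨(l : ℕ), h0⟩ : Fin k) < ⟨(l' : ℕ), h1⟩ from hll))
      rw [interleave_snd, interleave_snd] at h
      have e1 : Fin.castLE hk (⟨(l : ℕ), h0⟩ : Fin k) = l := Fin.ext rfl
      have e2 : Fin.castLE hk (⟨(l' : ℕ), h1⟩ : Fin k) = l' := Fin.ext rfl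
      rwa [e1, e2] at h
    · by_cases h0 : (l : ℕ) < k
      · have hA := (cell_snd_mem hk P hP p ⟨hmono, hIoo, hupper, humono⟩ l h0).2
        have hB := (hupper l' (le_of_not_gt h1)).1
        linarith
      · exact humono l l' (le_of_not_gt h0) hll
  · intro l
    by_cases h0 : (l : ℕ) < k
    · have h := cell_snd_mem hk P hP p ⟨hmono, hIoo, hupper, humono⟩ l h0
      exact ⟨h.1, lt_of_lt_of_le h.2 hab⟩
    · have h := hupper l (le_of_not_gt h0)
      exact ⟨lt_trans ha h.1, h.2⟩

end Helpers

section Disjoint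

variable {i j : ℕ} {a b : ℝ}

lemma cell_k_lt_absurd {k k' : ℕ} (hk : k ≤ j) (hk' : k' ≤ j) (hkk' : k < k')
    (P : Finset (Fin (i + k))) (hP : P.card = i)
    (P' : Finset (Fin (i + k'))) (hP' : P'.card = i)
    (p : (Fin i → ℝ) × (Fin j → ℝ))
    (h1 : p ∈ shuffleCell i j k hk a b P hP)
    (h2 : p ∈ shuffleCell i j k' hk' a b P' hP') : False := by
  set l : Fin j := ⟨k, lt_of_lt_of_le hkk' hk'⟩ with hl
  have hup : p.2 l ∈ Set.Ioo a b := h1.2.2.1 l (le_refl k)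
  have hlow : p.2 l ∈ Set.Ioo 0 a := cell_snd_mem hk' P' hP' p h2 l hkk'
  exact absurd (lt_trans hup.1 hlow.2) (lt_irrefl a)

lemma cell_P_subset {k : ℕ} (hk : k ≤ j)
    (P : Finset (Fin (i + k))) (hP : P.card = i)
    (P' : Finset (Fin (i + k))) (hP' : P'.card = i)
    (p : (Fin i → ℝ) × (Fin j → ℝ))
    (h1 : p ∈ shuffleCell i j k hk a b P hP)
    (h2 : p ∈ shuffleCell i j k hk a b P' hP') : P ⊆ P' := by
  set f := interleave i j k hk P hP p with hf
  set f' := interleave i j k hk P' hP' p with hf'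
  have hfm : StrictMono f := h1.1
  have hfm' : StrictMono f' := h2.1
  -- both are the increasing enumeration of the same finite set
  set S : Finset ℝ := Finset.image f Finset.univ with hSdef
  have hS : S.card = i + k := by
    rw [hSdef, Finset.card_image_of_injective _ hfm.injective, Finset.card_univ,
      Fintype.card_fin]
  have hfS : f = S.orderEmbOfFin hS :=
    Finset.orderEmbOfFin_unique hS
      (fun x => Finset.mem_image_of_mem _ (Finset.mem_univ x)) hfm
  have hfS' : f' = S.orderEmbOfFin hS := by
    refine Finset.orderEmbOfFin_unique hS (fun m => ?_) hfm'
    by_cases hm : m ∈ P'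
    · obtain ⟨x, hx⟩ := interleave_mem_exists hk P' hP' p hm
      rw [← hf'] at hx
      rw [hx, ← interleave_fst hk P hP p x, ← hf]
      exact Finset.mem_image_of_mem _ (Finset.mem_univ _)
    · obtain ⟨l, hl⟩ := interleave_notMem_exists hk P' hP' p hm
      rw [← hf'] at hl
      rw [hl, ← interleave_snd hk P hP p l, ← hf]
      exact Finset.mem_image_of_mem _ (Finset.mem_univ _)
  have hff' : f = f' := by rw [hfS, hfS']
  intro m hm
  by_contra hm'
  obtain ⟨l, hl⟩ := interleave_notMem_exists hk P' hP' p hm'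
  rw [← hf'] at hl
  have h3 : f m = f (Pᶜ.orderEmbOfFin (card_compl' P hP) l) := by
    have e1 : f (Pᶜ.orderEmbOfFin (card_compl' P hP) l) = p.2 (Fin.castLE hk l) :=
      interleave_snd hk P hP p l
    rw [e1, ← hl, hff']
  have h4 : m = Pᶜ.orderEmbOfFin (card_compl' P hP) l := hfm.injective h3
  have h5 : m ∈ Pᶜ := h4 ▸ Pᶜ.orderEmbOfFin_mem (card_compl' P hP) l
  exact (Finset.mem_compl.mp h5) hm

lemma cell_P_eq {k : ℕ} (hk : k ≤ j)
    (P : Finset (Fin (i + k))) (hP : P.card = i)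
    (P' : Finset (Fin (i + k))) (hP' : P'.card = i)
    (p : (Fin i → ℝ) × (Fin j → ℝ))
    (h1 : p ∈ shuffleCell i j k hk a b P hP)
    (h2 : p ∈ shuffleCell i j k hk a b P' hP') : P = P' :=
  Finset.eq_of_subset_of_card_le (cell_P_subset hk P hP P' hP' p h1 h2)
    (le_of_eq (hP'.trans hP.symm))

end Disjoint

section Forward

variable {i j : ℕ} {a b : ℝ}

lemma forward_exists (ha : 0 < a) (hab : a ≤ b)
    (p : (Fin i → ℝ) × (Fin j → ℝ))
    (hne : ∀ l, p.2 l ≠ a) (hdis : ∀ m l, p.1 m ≠ p.2 l)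
    (hp : p ∈ simplex i a ×ˢ simplex j b) :
    ∃ (k : ℕ) (hk : k ≤ j) (P : Finset (Fin (i + k))) (hP : P.card = i),
      p ∈ shuffleCell i j k hk a b P hP := by
  obtain ⟨⟨h1mono, h1I⟩, h2mono, h2I⟩ := hp
  classical
  set K : Finset (Fin j) := Finset.univ.filter (fun l => p.2 l < a) with hKdef
  set k := K.card with hkdef
  have hkj : k ≤ j := by
    calc k ≤ Finset.univ.card := Finset.card_filter_le _ _
    _ = j := by rw [Finset.card_univ, Fintype.card_fin]
  have hKchar : ∀ l : Fin j, p.2 l < a ↔ (l : ℕ) < k := by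
    intro l
    constructor
    · intro h
      have hsub : Finset.Iic l ⊆ K := by
        intro l' hl'
        rw [hKdef, Finset.mem_filter]
        refine ⟨Finset.mem_univ _, ?_⟩
        exact lt_of_le_of_lt (h2mono.monotone (Finset.mem_Iic.mp hl')) h
      have hc := Finset.card_le_card hsub
      rw [Fin.card_Iic] at hc
      omega
    · intro h
      by_contra hlt
      have hsub : K ⊆ Finset.Iio l := by
        intro l' hl'
        rw [hKdef, Finset.mem_filter] at hl'
        rw [Finset.mem_Iio]
        by_contra hge
        exact hlt (lt_of_le_of_lt (h2mono.monotone (le_of_not_gt hge)) hl'.2)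
      have hc := Finset.card_le_card hsub
      rw [Fin.card_Iio] at hc
      omega
  refine ⟨k, hkj, ?_⟩
  set A : Finset ℝ := Finset.image p.1 Finset.univ with hAdef
  set B : Finset ℝ := Finset.image (fun l : Fin k => p.2 (Fin.castLE hkj l)) Finset.univ
    with hBdef
  have hA : A.card = i := by
    rw [hAdef, Finset.card_image_of_injective _ h1mono.injective, Finset.card_univ,
      Fintype.card_fin]
  have h2c : StrictMono (fun l : Fin k => p.2 (Fin.castLE hkj l)) :=
    h2mono.comp (Fin.strictMono_castLE hkj)
  have hB : B.card = k := by
    rw [hBdef, Finset.card_image_of_injective _ h2c.injective, Finset.card_univ,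
      Fintype.card_fin]
  have hdisj : Disjoint A B := by
    rw [Finset.disjoint_left]
    intro x hxA hxB
    rw [hAdef, Finset.mem_image] at hxA
    rw [hBdef, Finset.mem_image] at hxB
    obtain ⟨m, _, rfl⟩ := hxA
    obtain ⟨l, _, hl⟩ := hxB
    exact hdis m _ hl.symm
  set S : Finset ℝ := A ∪ B with hSdef
  have hS : S.card = i + k := by
    rw [hSdef, Finset.card_union_of_disjoint hdisj, hA, hB]
  set e : Fin (i + k) → ℝ := fun m => S.orderEmbOfFin hS m with hedef
  have heS : ∀ m, e m ∈ S := fun m => S.orderEmbOfFin_mem hS m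
  have hemono : StrictMono e := (S.orderEmbOfFin hS).strictMono
  set P : Finset (Fin (i + k)) := Finset.univ.filter (fun m => e m ∈ A) with hPdef
  have hPmem : ∀ m, m ∈ P ↔ e m ∈ A := by
    intro m; rw [hPdef, Finset.mem_filter]; simp
  have hsurj : ∀ x ∈ S, ∃ m, e m = x := by
    intro x hx
    have : x ∈ Set.range (S.orderEmbOfFin hS) := by
      rw [Finset.range_orderEmbOfFin]; exact hx
    exact this
  have hPcard : P.card = i := by
    have himg : Finset.image e P = A := by
      apply Finset.Subset.antisymm
      · intro x hx
        rw [Finset.mem_image] at hx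
        obtain ⟨m, hm, rfl⟩ := hx
        exact (hPmem m).mp hm
      · intro x hx
        obtain ⟨m, rfl⟩ := hsurj x (Finset.mem_union_left _ hx)
        exact Finset.mem_image_of_mem _ ((hPmem m).mpr hx)
    calc P.card = (Finset.image e P).card :=
          (Finset.card_image_of_injective _ hemono.injective).symm
    _ = A.card := by rw [himg]
    _ = i := hA
  refine ⟨P, hPcard, ?_⟩
  -- the interleaving equals the increasing enumeration of S
  have hp1 : p.1 = A.orderEmbOfFin hA :=
    Finset.orderEmbOfFin_unique hA
      (fun x => Finset.mem_image_of_mem _ (Finset.mem_univ x)) h1mono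
  have hp2 : (fun l : Fin k => p.2 (Fin.castLE hkj l)) = B.orderEmbOfFin hB :=
    Finset.orderEmbOfFin_unique hB
      (fun x => Finset.mem_image_of_mem _ (Finset.mem_univ x)) h2c
  have hg : (fun x : Fin i => e (P.orderEmbOfFin hPcard x)) = A.orderEmbOfFin hA := by
    refine Finset.orderEmbOfFin_unique hA (fun x => ?_)
      (hemono.comp (P.orderEmbOfFin hPcard).strictMono)
    exact (hPmem _).mp (P.orderEmbOfFin_mem hPcard x)
  have hg' : (fun x : Fin k => e (Pᶜ.orderEmbOfFin (card_compl' P hPcard) x))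
      = B.orderEmbOfFin hB := by
    refine Finset.orderEmbOfFin_unique hB (fun x => ?_)
      (hemono.comp (Pᶜ.orderEmbOfFin (card_compl' P hPcard)).strictMono)
    have hmem : Pᶜ.orderEmbOfFin (card_compl' P hPcard) x ∈ Pᶜ :=
      Pᶜ.orderEmbOfFin_mem (card_compl' P hPcard) x
    have hnotP : Pᶜ.orderEmbOfFin (card_compl' P hPcard) x ∉ P :=
      Finset.mem_compl.mp hmem
    have hnotA : e (Pᶜ.orderEmbOfFin (card_compl' P hPcard) x) ∉ A :=
      fun h => hnotP ((hPmem _).mpr h)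
    have hin : e (Pᶜ.orderEmbOfFin (card_compl' P hPcard) x) ∈ S := heS _
    rw [hSdef, Finset.mem_union] at hin
    exact hin.resolve_left hnotA
  have hfe : interleave i j k hkj P hPcard p = e := by
    funext m
    by_cases hm : m ∈ P
    · rw [interleave, dif_pos hm]
      have hx : P.orderEmbOfFin hPcard ((P.orderIsoOfFin hPcard).symm ⟨m, hm⟩) = m := by
        rw [← P.coe_orderIsoOfFin_apply hPcard, OrderIso.apply_symm_apply]
      exact ((congrFun hp1 ((P.orderIsoOfFin hPcard).symm ⟨m, hm⟩)).trans
        (congrFun hg ((P.orderIsoOfFin hPcard).symm ⟨m, hm⟩)).symm).trans (congrArg e hx)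
    · rw [interleave, dif_neg hm]
      have hmc : m ∈ Pᶜ := Finset.mem_compl.mpr hm
      have hx : Pᶜ.orderEmbOfFin (card_compl' P hPcard)
          ((Pᶜ.orderIsoOfFin (card_compl' P hPcard)).symm ⟨m, hmc⟩) = m := by
        rw [← Pᶜ.coe_orderIsoOfFin_apply (card_compl' P hPcard), OrderIso.apply_symm_apply]
      exact ((congrFun hp2 ((Pᶜ.orderIsoOfFin (card_compl' P hPcard)).symm ⟨m, hmc⟩)).trans
        (congrFun hg' ((Pᶜ.orderIsoOfFin (card_compl' P hPcard)).symm ⟨m, hmc⟩)).symm).trans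
        (congrArg e hx)
  refine ⟨?_, ?_, ?_, ?_⟩
  · rw [hfe]; exact hemono
  · intro m
    rw [hfe]
    have hin : e m ∈ S := heS m
    rw [hSdef, Finset.mem_union] at hin
    rcases hin with h | h
    · rw [hAdef, Finset.mem_image] at h
      obtain ⟨x, _, hx⟩ := h
      rw [← hx]
      exact h1I x
    · rw [hBdef, Finset.mem_image] at h
      obtain ⟨l, _, hl⟩ := h
      rw [← hl]
      refine ⟨(h2I _).1, ?_⟩
      rw [hKchar]
      exact l.isLt
  · intro l hl
    have h1 : ¬ p.2 l < a := fun h => by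
      rw [hKchar] at h; omega
    have h2 : p.2 l ≠ a := hne l
    exact ⟨lt_of_le_of_ne (le_of_not_gt h1) (Ne.symm h2), (h2I l).2⟩
  · intro l l' _ hll
    exact h2mono hll

end Forward

section NullSets

variable {i j : ℕ}

lemma ae_snd_ne (a : ℝ) :
    ∀ᵐ p : (Fin i → ℝ) × (Fin j → ℝ) ∂volume, ∀ l : Fin j, p.2 l ≠ a := by
  rw [ae_all_iff]
  intro l
  rw [ae_iff]
  have hset : {p : (Fin i → ℝ) × (Fin j → ℝ) | ¬ p.2 l ≠ a}
      = Set.univ ×ˢ {v : Fin j → ℝ | v l = a} := by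
    ext p; simp [Set.mem_prod]
  rw [hset, Measure.volume_eq_prod, Measure.prod_prod]
  have h0 : (volume : Measure (Fin j → ℝ)) {v | v l = a} = 0 := by
    rw [volume_pi]
    exact Measure.pi_hyperplane (fun _ : Fin j => (volume : Measure ℝ)) l a
  rw [h0, mul_zero]

lemma ae_fst_ne_snd :
    ∀ᵐ p : (Fin i → ℝ) × (Fin j → ℝ) ∂volume,
      ∀ (m : Fin i) (l : Fin j), p.1 m ≠ p.2 l := by
  rw [ae_all_iff]
  intro m
  rw [ae_all_iff]
  intro l
  rw [ae_iff]
  have hf : Measurable fun p : (Fin i → ℝ) × (Fin j → ℝ) => p.1 m :=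
    (measurable_pi_apply m).comp measurable_fst
  have hg : Measurable fun p : (Fin i → ℝ) × (Fin j → ℝ) => p.2 l :=
    (measurable_pi_apply l).comp measurable_snd
  have hmeas : MeasurableSet {p : (Fin i → ℝ) × (Fin j → ℝ) | p.1 m = p.2 l} :=
    measurableSet_eq_fun hf hg
  have hset : {p : (Fin i → ℝ) × (Fin j → ℝ) | ¬ p.1 m ≠ p.2 l}
      = {p : (Fin i → ℝ) × (Fin j → ℝ) | p.1 m = p.2 l} := by
    ext p; simp
  rw [hset, Measure.volume_eq_prod, Measure.measure_prod_null hmeas]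
  refine Filter.Eventually.of_forall (fun u => ?_)
  have hpre : (Prod.mk u ⁻¹' {p : (Fin i → ℝ) × (Fin j → ℝ) | p.1 m = p.2 l})
      = {v : Fin j → ℝ | v l = u m} := by
    ext v; simp [eq_comm]
  simp only [Pi.zero_apply]
  rw [hpre, volume_pi]
  exact Measure.pi_hyperplane (fun _ : Fin j => (volume : Measure ℝ)) l (u m)

end NullSets

/-- For `0 < a ≤ b`, the product `Δ^i[0,a] × Δ^j[0,b]` is, up to
Lebesgue-null sets, the disjoint union over `k = 0,…,j` and `(i,k)`-shuffles of the
corresponding shuffle cells. -/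
theorem simplex_product_decomposition (i j : ℕ) (a b : ℝ) (ha : 0 < a) (hab : a ≤ b) :
    Pairwise (Function.onFun Disjoint
      (fun x : Σ k : Fin (j + 1), {P : Finset (Fin (i + ↑k)) // P.card = i} =>
        shuffleCell i j x.1 (Nat.lt_succ_iff.mp x.1.isLt) a b x.2.1 x.2.2)) ∧
    ∀ᵐ p ∂(volume : Measure ((Fin i → ℝ) × (Fin j → ℝ))),
      (p ∈ simplex i a ×ˢ simplex j b ↔
        ∃ x : Σ k : Fin (j + 1), {P : Finset (Fin (i + ↑k)) // P.card = i},
          p ∈ shuffleCell i j x.1 (Nat.lt_succ_iff.mp x.1.isLt) a b x.2.1 x.2.2) := by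
  constructor
  · rintro ⟨k₁, P₁, hP₁⟩ ⟨k₂, P₂, hP₂⟩ hne
    rw [Function.onFun, Set.disjoint_left]
    intro p hp1 hp2
    have hk12 : (k₁ : ℕ) = (k₂ : ℕ) := by
      rcases lt_trichotomy (k₁ : ℕ) (k₂ : ℕ) with h | h | h
      · exact absurd (cell_k_lt_absurd _ _ h P₁ hP₁ P₂ hP₂ p hp1 hp2) (fun f => f)
      · exact h
      · exact absurd (cell_k_lt_absurd _ _ h P₂ hP₂ P₁ hP₁ p hp2 hp1) (fun f => f)
    have hk : k₁ = k₂ := Fin.ext hk12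
    subst hk
    have hPP : P₁ = P₂ :=
      cell_P_eq (Nat.lt_succ_iff.mp k₁.isLt) P₁ hP₁ P₂ hP₂ p hp1 hp2
    have hsub : (⟨P₁, hP₁⟩ : {P : Finset (Fin (i + (k₁ : ℕ))) // P.card = i}) = ⟨P₂, hP₂⟩ :=
      Subtype.ext hPP
    exact hne (by cases hsub; rfl)
  · filter_upwards [ae_snd_ne (i := i) (j := j) a, ae_fst_ne_snd (i := i) (j := j)]
      with p hne hdis
    constructor
    · intro hp
      obtain ⟨k, hk, P, hP, hcell⟩ := forward_exists ha hab p hne hdis hp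
      exact ⟨⟨⟨k, Nat.lt_succ_of_le hk⟩, ⟨P, hP⟩⟩, hcell⟩
    · rintro ⟨⟨k, P, hP⟩, hcell⟩
      exact cell_subset (Nat.lt_succ_iff.mp k.isLt) P hP ha hab hcell
end
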